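/- arXiv:1411.4799 — 10 statements merged into one kernel-verified Lean document; each statement's English description precedes it below -/
import Mathlib

section
/- Let T > 0, let U : [0,T] → ℝ be continuous and let s ∈ (0,T]. If x, y : [0,s) → ℝ are backward solutions of the backward chordal Loewner equation on [0,s) which both hit the singularity at time s (i.e. x(t) → U(T−s) and y(t) → U(T−s) as t → s⁻) and x(0) < y(0), then x(0) < U(T) < y(0). Consequently, there exist at most two real numbers x₀ such that some backward solution on [0,s) with initial value x₀ hits the singularity at time s, and if there are two, then one is smaller than U(T) and the other is larger than U(T). -/
/-!
Two solutions on the same side of the driving function move apart: writing `u t = U (T - t)`,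
`(y - x)' = 2 (y - x) / ((x - u) (y - u))`, so `(y - x) ^ 2` is nondecreasing as long as
`x - u` and `y - u` have the same sign, and by continuity they keep the sign they have at `t = 0`.
If both solutions hit the singularity, `(y - x) ^ 2 → 0`, which forces `x 0 = y 0`. Hence two
distinct initial values of hitting solutions lie on opposite sides of `U T`, and there are at
most two of them.
-/

/-- A backward solution of the backward chordal Loewner equation on `[0,s)` for the
driving function `U : [0,T] → ℝ`. -/
def IsBackwardSol (U : ℝ → ℝ) (T s : ℝ) (x : ℝ → ℝ) : Prop :=
  ∀ t ∈ Set.Ico (0 : ℝ) s, x t ≠ U (T - t) ∧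
    HasDerivWithinAt x (-2 / (x t - U (T - t))) (Set.Ico 0 s) t

/-- The backward solution `x` hits the singularity at time `s`, i.e.
`x(t) → U(T−s)` as `t → s⁻`. -/
def HitsSingularity (U : ℝ → ℝ) (T s : ℝ) (x : ℝ → ℝ) : Prop :=
  Filter.Tendsto x (nhdsWithin s (Set.Iio s)) (nhds (U (T - s)))

open Set Filter Topology

theorem Set.encard_le_two_of_straddle {α : Type*} [LinearOrder α] {S : Set α} (c : α)
    (h : ∀ a ∈ S, ∀ b ∈ S, a < b → a < c ∧ c < b) : S.encard ≤ 2 := by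
  have hle : (S ∩ Iic c).encard ≤ 1 := encard_le_one_iff.2 fun a b ha hb => by
    by_contra hne
    rcases lt_or_gt_of_ne hne with hab | hab
    · exact (h a ha.1 b hb.1 hab).2.not_ge hb.2
    · exact (h b hb.1 a ha.1 hab).2.not_ge ha.2
  have hgt : (S ∩ Ioi c).encard ≤ 1 := encard_le_one_iff.2 fun a b ha hb => by
    by_contra hne
    rcases lt_or_gt_of_ne hne with hab | hab
    · exact (h a ha.1 b hb.1 hab).1.not_gt ha.2
    · exact (h b hb.1 a ha.1 hab).1.not_gt hb.2
  calc S.encard = (S ∩ Iic c ∪ S ∩ Ioi c).encard := by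
        rw [← inter_union_distrib_left, Iic_union_Ioi, inter_univ]
    _ ≤ (S ∩ Iic c).encard + (S ∩ Ioi c).encard := encard_union_le _ _
    _ ≤ 1 + 1 := add_le_add hle hgt
    _ = 2 := one_add_one_eq_two

namespace IsBackwardSol

variable {U : ℝ → ℝ} {T s : ℝ} {x y : ℝ → ℝ}

lemma continuousOn (hx : IsBackwardSol U T s x) : ContinuousOn x (Ico 0 s) :=
  fun t ht => (hx t ht).2.continuousWithinAt

lemma ne_driving_zero (hx : IsBackwardSol U T s x) (hs : 0 < s) : x 0 ≠ U T := by
  simpa using (hx 0 ⟨le_rfl, hs⟩).1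

lemma mul_sub_driving_pos (hU : ContinuousOn U (Icc 0 T)) (hsT : s ≤ T)
    (hx : IsBackwardSol U T s x) (hy : IsBackwardSol U T s y)
    (h0 : 0 < (x 0 - U T) * (y 0 - U T)) :
    ∀ t ∈ Ico 0 s, 0 < (x t - U (T - t)) * (y t - U (T - t)) := by
  intro t ht
  have hu : ContinuousOn (fun t => U (T - t)) (Ico 0 s) :=
    hU.comp (by fun_prop) fun r hr => ⟨by linarith [hr.2], by linarith [hr.1]⟩
  refine isPreconnected_Ico.lt_of_ne
    ((hx.continuousOn.sub hu).mul (hy.continuousOn.sub hu))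
    (fun r hr => mul_ne_zero (sub_ne_zero.2 (hx r hr).1) (sub_ne_zero.2 (hy r hr).1))
    ⟨0, ⟨le_rfl, ht.1.trans_lt ht.2⟩, by simpa using h0⟩ ht

lemma monotoneOn_sq_sub (hx : IsBackwardSol U T s x) (hy : IsBackwardSol U T s y)
    (hside : ∀ t ∈ Ico 0 s, 0 < (x t - U (T - t)) * (y t - U (T - t))) :
    MonotoneOn (fun t => (y t - x t) ^ 2) (Ico 0 s) := by
  refine monotoneOn_of_hasDerivWithinAt_nonneg (convex_Ico 0 s)
    ((hy.continuousOn.sub hx.continuousOn).pow 2)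
    (f' := fun t => 4 * (y t - x t) ^ 2 / ((x t - U (T - t)) * (y t - U (T - t)))) ?_ ?_
  · intro t ht
    have ht' := interior_subset ht
    refine ((((hy t ht').2.sub (hx t ht').2).pow 2).mono interior_subset).congr_deriv ?_
    field_simp [sub_ne_zero.2 (hx t ht').1, sub_ne_zero.2 (hy t ht').1]
    simp only [Pi.sub_apply]
    ring
  · exact fun t ht => div_nonneg (by positivity) (hside t (interior_subset ht)).le

lemma eq_of_hitsSingularity (hU : ContinuousOn U (Icc 0 T)) (hs : s ∈ Ioc 0 T)
    (hx : IsBackwardSol U T s x) (hy : IsBackwardSol U T s y)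
    (hxhit : HitsSingularity U T s x) (hyhit : HitsSingularity U T s y)
    (h0 : 0 < (x 0 - U T) * (y 0 - U T)) : x 0 = y 0 := by
  have hmono := monotoneOn_sq_sub hx hy (mul_sub_driving_pos hU hs.2 hx hy h0)
  have hlim : Tendsto (fun t => (y t - x t) ^ 2) (𝓝[<] s) (𝓝 0) := by
    simpa using (hyhit.sub hxhit).pow 2
  have hgrow : ∀ᶠ t in 𝓝[<] s, (y 0 - x 0) ^ 2 ≤ (y t - x t) ^ 2 := by
    filter_upwards [Ioo_mem_nhdsLT hs.1] with t ht
    exact hmono ⟨le_rfl, hs.1⟩ (Ioo_subset_Ico_self ht) ht.1.le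
  have := ge_of_tendsto hlim hgrow
  nlinarith [sq_nonneg (y 0 - x 0)]

lemma lt_driving_lt (hU : ContinuousOn U (Icc 0 T)) (hs : s ∈ Ioc 0 T)
    (hx : IsBackwardSol U T s x) (hy : IsBackwardSol U T s y)
    (hxhit : HitsSingularity U T s x) (hyhit : HitsSingularity U T s y)
    (hxy : x 0 < y 0) : x 0 < U T ∧ U T < y 0 := by
  have hx0 := hx.ne_driving_zero hs.1
  have hy0 := hy.ne_driving_zero hs.1
  have hopp : ¬ 0 < (x 0 - U T) * (y 0 - U T) :=
    fun h => hxy.ne (eq_of_hitsSingularity hU hs hx hy hxhit hyhit h)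
  constructor
  · by_contra! h
    have hx' : U T < x 0 := h.lt_of_ne hx0.symm
    exact hopp (mul_pos (by linarith) (by linarith))
  · by_contra! h
    have hy' : y 0 < U T := h.lt_of_ne hy0
    exact hopp (mul_pos_of_neg_of_neg (by linarith) (by linarith))

end IsBackwardSol

theorem stmt_1_general (T : ℝ) (U : ℝ → ℝ) (hU : ContinuousOn U (Set.Icc 0 T))
    (s : ℝ) (hs : s ∈ Set.Ioc 0 T) (x y : ℝ → ℝ)
    (hx : IsBackwardSol U T s x) (hy : IsBackwardSol U T s y)
    (hxhit : HitsSingularity U T s x) (hyhit : HitsSingularity U T s y)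
    (hxy : x 0 < y 0) :
    (x 0 < U T ∧ U T < y 0) ∧
    Set.encard {a : ℝ | ∃ z : ℝ → ℝ, z 0 = a ∧ IsBackwardSol U T s z ∧
      HitsSingularity U T s z} ≤ 2 ∧
    ∀ a ∈ {a : ℝ | ∃ z : ℝ → ℝ, z 0 = a ∧ IsBackwardSol U T s z ∧
        HitsSingularity U T s z},
      ∀ b ∈ {a : ℝ | ∃ z : ℝ → ℝ, z 0 = a ∧ IsBackwardSol U T s z ∧
        HitsSingularity U T s z},
      a < b → a < U T ∧ U T < b := by
  set S := {a : ℝ | ∃ z : ℝ → ℝ, z 0 = a ∧ IsBackwardSol U T s z ∧ HitsSingularity U T s z}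
  have hstraddle : ∀ a ∈ S, ∀ b ∈ S, a < b → a < U T ∧ U T < b := by
    rintro _ ⟨z, rfl, hz, hzhit⟩ _ ⟨w, rfl, hw, hwhit⟩ hzw
    exact hz.lt_driving_lt hU hs hw hzhit hwhit hzw
  exact ⟨hx.lt_driving_lt hU hs hy hxhit hyhit hxy,
    Set.encard_le_two_of_straddle (U T) hstraddle, hstraddle⟩

/-- If two backward solutions on `[0,s)` both hit the singularity at
time `s` and `x 0 < y 0`, then `x 0 < U T < y 0`; consequently there are at most two
initial values whose solutions hit the singularity at time `s`, and any two of them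
straddle `U T`. -/
theorem stmt_1 (T : ℝ) (hT : 0 < T) (U : ℝ → ℝ) (hU : ContinuousOn U (Set.Icc 0 T))
    (s : ℝ) (hs : s ∈ Set.Ioc 0 T) (x y : ℝ → ℝ)
    (hx : IsBackwardSol U T s x) (hy : IsBackwardSol U T s y)
    (hxhit : HitsSingularity U T s x) (hyhit : HitsSingularity U T s y)
    (hxy : x 0 < y 0) :
    (x 0 < U T ∧ U T < y 0) ∧
    Set.encard {a : ℝ | ∃ z : ℝ → ℝ, z 0 = a ∧ IsBackwardSol U T s z ∧
      HitsSingularity U T s z} ≤ 2 ∧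
    ∀ a ∈ {a : ℝ | ∃ z : ℝ → ℝ, z 0 = a ∧ IsBackwardSol U T s z ∧
        HitsSingularity U T s z},
      ∀ b ∈ {a : ℝ | ∃ z : ℝ → ℝ, z 0 = a ∧ IsBackwardSol U T s z ∧
        HitsSingularity U T s z},
      a < b → a < U T ∧ U T < b :=
  stmt_1_general T U hU s hs x y hx hy hxhit hyhit hxy
end

section
/- Let T > 0 and let U : [0,T] → ℝ be continuous. Then the following are equivalent: (a) U is welded on [0,T]; (b) for every τ ∈ [0,T) there exists ε > 0 such that for every x₀ ∈ ℝ with x₀ ≠ U(τ) there is a function x : [τ,T] → ℝ with x(τ) = x₀, x(t) ≠ U(t) for all t ∈ [τ,T], x differentiable with x'(t) = 2/(x(t) − U(t)) for all t ∈ [τ,T], and |x(T) − U(T)| > ε. -/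
/-- The driving function `U` is welded on `[0,T]`: for every `s ∈ (0,T]` there are
exactly two initial values whose backward solutions hit the singularity at time `s`,
and they straddle `U T`. -/
def Welded (U : ℝ → ℝ) (T : ℝ) : Prop :=
  ∀ s ∈ Set.Ioc (0 : ℝ) T, ∃ x₀ y₀ : ℝ, x₀ < U T ∧ U T < y₀ ∧
    {a : ℝ | ∃ x : ℝ → ℝ, x 0 = a ∧ IsBackwardSol U T s x ∧ HitsSingularity U T s x}
      = {x₀, y₀}

open Set Filter Topology

def IsForwardSol (U : ℝ → ℝ) (s : Set ℝ) (x : ℝ → ℝ) : Prop :=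
  ∀ t ∈ s, x t ≠ U t ∧ HasDerivWithinAt x (2 / (x t - U t)) s t

-- Under `t ↦ T - t` these are exactly the backward solutions hitting the singularity at `T - τ`.
def IsEmanating (U : ℝ → ℝ) (τ T : ℝ) (X : ℝ → ℝ) : Prop :=
  IsForwardSol U (Ioc τ T) X ∧ Tendsto X (𝓝[>] τ) (𝓝 (U τ))

def EscapesUniformly (U : ℝ → ℝ) (T : ℝ) : Prop :=
  ∀ τ ∈ Ico (0 : ℝ) T, ∃ ε > 0, ∀ x₀ : ℝ, x₀ ≠ U τ →
    ∃ x : ℝ → ℝ, x τ = x₀ ∧ IsForwardSol U (Icc τ T) x ∧ ε < |x T - U T|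

lemma exists_pos_add_le_of_forall_lt {a b : ℝ} {f g : ℝ → ℝ} (hf : ContinuousOn f (Icc a b))
    (hg : ContinuousOn g (Icc a b)) (h : ∀ t ∈ Icc a b, f t < g t) :
    ∃ m > 0, ∀ t ∈ Icc a b, f t + m ≤ g t := by
  obtain ⟨m, hm, hle⟩ :=
    isCompact_Icc.exists_forall_le' (hg.sub hf) (a := 0) fun t ht => sub_pos.2 (h t ht)
  exact ⟨m, hm, fun t ht => by linarith [hle t ht, show (g - f) t = g t - f t from rfl]⟩

lemma HasDerivWithinAt.comp_const_sub_of_mapsTo {f : ℝ → ℝ} {f' c t : ℝ} {s s' : Set ℝ}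
    (hf : HasDerivWithinAt f f' s (c - t)) (hs : MapsTo (c - ·) s' s) :
    HasDerivWithinAt (fun u => f (c - u)) (-f') s' t := by
  simpa [Function.comp_def] using hf.scomp t ((hasDerivWithinAt_id t s').const_sub c) hs

namespace IsForwardSol

variable {U x : ℝ → ℝ} {s : Set ℝ}

lemma mono (hx : IsForwardSol U s x) {s' : Set ℝ} (hs : s' ⊆ s) : IsForwardSol U s' x :=
  fun t ht => ⟨(hx t (hs ht)).1, (hx t (hs ht)).2.mono hs⟩

lemma continuousOn (hx : IsForwardSol U s x) : ContinuousOn x s :=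
  fun t ht => (hx t ht).2.continuousWithinAt

lemma neg (hx : IsForwardSol U s x) : IsForwardSol (-U) s (-x) := by
  intro t ht
  refine ⟨by simpa using (hx t ht).1, ?_⟩
  have h := (hx t ht).2.neg
  rwa [← div_neg, neg_sub, ← neg_sub_neg] at h

lemma of_neg (hx : IsForwardSol (-U) s x) : IsForwardSol U s (-x) := by
  simpa using hx.neg

lemma forall_lt_of_lt (hs : s.OrdConnected) (hU : ContinuousOn U s) (hx : IsForwardSol U s x)
    {p : ℝ} (hp : p ∈ s) (hxp : U p < x p) : ∀ t ∈ s, U t < x t := by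
  intro t ht
  by_contra! hxt
  obtain ⟨c, hc, hxc⟩ :=
    hs.isPreconnected.intermediate_value₂ ht hp hx.continuousOn hU hxt hxp.le
  exact (hx c hc).1 hxc

end IsForwardSol

theorem ODE_solution_le_of_le {v : ℝ → ℝ → ℝ} {K : NNReal} {f g : ℝ → ℝ} {a b : ℝ}
    (hv : ∀ t ∈ Icc a b, LipschitzWith K (v t))
    (hf : ∀ t ∈ Icc a b, HasDerivWithinAt f (v t (f t)) (Icc a b) t)
    (hg : ∀ t ∈ Icc a b, HasDerivWithinAt g (v t (g t)) (Icc a b) t)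
    (ha : f a ≤ g a) : ∀ t ∈ Icc a b, f t ≤ g t := by
  intro t ht
  by_contra! hgf
  have hfc : ContinuousOn f (Icc a b) := fun u hu => (hf u hu).continuousWithinAt
  have hgc : ContinuousOn g (Icc a b) := fun u hu => (hg u hu).continuousWithinAt
  have hat : Icc a t ⊆ Icc a b := Icc_subset_Icc_right ht.2
  obtain ⟨t₀, ht₀, hfg⟩ := isPreconnected_Icc.intermediate_value₂ (left_mem_Icc.2 ht.1)
    (right_mem_Icc.2 ht.1) (hfc.mono hat) (hgc.mono hat) ha hgf.le
  have hsub : Icc t₀ t ⊆ Icc a b := Icc_subset_Icc ht₀.1 ht.2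
  have hnhds : ∀ u ∈ Ico t₀ t, Icc a b ∈ 𝓝[≥] u := fun u hu =>
    Icc_mem_nhdsGE_of_mem ⟨ht₀.1.trans hu.1, hu.2.trans_le ht.2⟩
  have := ODE_solution_unique_of_mem_Icc_right (s := fun _ => univ)
    (fun u hu => (hv u (hsub (Ico_subset_Icc_self hu))).lipschitzOnWith) (hfc.mono hsub)
    (fun u hu => (hf u (hsub (Ico_subset_Icc_self hu))).mono_of_mem_nhdsWithin (hnhds u hu))
    (fun _ _ => mem_univ _) (hgc.mono hsub)
    (fun u hu => (hg u (hsub (Ico_subset_Icc_self hu))).mono_of_mem_nhdsWithin (hnhds u hu))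
    (fun _ _ => mem_univ _) hfg (right_mem_Icc.2 ht₀.2)
  exact hgf.ne' this

-- Globally Lipschitz in `x` once `L` stays a fixed distance above `U`, and equal to the Loewner
-- field `2 / (x - U t)` above the barrier `L`.
noncomputable def clampedField (U L : ℝ → ℝ) (t x : ℝ) : ℝ := 2 / (max x (L t) - U t)

section ClampedField

variable {U L : ℝ → ℝ}

lemma clampedField_pos {t : ℝ} (hL : U t < L t) (x : ℝ) : 0 < clampedField U L t x :=
  div_pos two_pos (sub_pos.2 (hL.trans_le (le_max_right x (L t))))

lemma clampedField_le {t m : ℝ} (hm : 0 < m) (hL : U t + m ≤ L t) (x : ℝ) :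
    clampedField U L t x ≤ 2 / m :=
  div_le_div_of_nonneg_left zero_le_two hm (by linarith [le_max_right x (L t)])

lemma lipschitzWith_clampedField {t m : ℝ} (hm : 0 < m) (hL : U t + m ≤ L t) :
    LipschitzWith ⟨2 / m ^ 2, by positivity⟩ (clampedField U L t) := by
  refine LipschitzWith.of_dist_le_mul fun p q => ?_
  have hBA : |(max q (L t) - U t) - (max p (L t) - U t)| ≤ |p - q| := by
    rw [sub_sub_sub_cancel_right, abs_sub_comm]
    exact abs_max_sub_max_le_abs p q (L t)
  have hA : m ≤ max p (L t) - U t := by linarith [le_max_right p (L t)]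
  have hB : m ≤ max q (L t) - U t := by linarith [le_max_right q (L t)]
  change |2 / (max p (L t) - U t) - 2 / (max q (L t) - U t)| ≤ 2 / m ^ 2 * |p - q|
  generalize max p (L t) - U t = A at *
  generalize max q (L t) - U t = B at *
  have hA0 : 0 < A := hm.trans_le hA
  have hB0 : 0 < B := hm.trans_le hB
  have hAB : m ^ 2 ≤ A * B := by nlinarith
  rw [div_sub_div _ _ hA0.ne' hB0.ne', abs_div, abs_of_pos (mul_pos hA0 hB0),
    div_le_iff₀ (mul_pos hA0 hB0), show 2 * B - A * 2 = 2 * (B - A) by ring, abs_mul, abs_two]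
  calc 2 * |B - A| ≤ 2 / m ^ 2 * |p - q| * m ^ 2 := by field_simp; linarith
    _ ≤ 2 / m ^ 2 * |p - q| * (A * B) := by gcongr

lemma continuousOn_clampedField {s : Set ℝ} (hU : ContinuousOn U s) (hL : ContinuousOn L s)
    (hUL : ∀ t ∈ s, U t < L t) (x : ℝ) : ContinuousOn (fun t => clampedField U L t x) s :=
  continuousOn_const.div ((continuousOn_const.sup hL).sub hU) fun t ht =>
    (sub_pos.2 ((hUL t ht).trans_le (le_max_right _ _))).ne'

lemma exists_hasDerivWithinAt_clampedField {a b : ℝ} (hab : a ≤ b)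
    (hU : ContinuousOn U (Icc a b)) (hL : ContinuousOn L (Icc a b))
    (hUL : ∀ t ∈ Icc a b, U t < L t) (x₀ : ℝ) :
    ∃ z : ℝ → ℝ, z a = x₀ ∧
      ∀ t ∈ Icc a b, HasDerivWithinAt z (clampedField U L t (z t)) (Icc a b) t := by
  obtain ⟨m, hm, hmL⟩ := exists_pos_add_le_of_forall_lt hU hL hUL
  have hPL : IsPicardLindelof (clampedField U L) (tmin := a) (tmax := b)
      ⟨a, left_mem_Icc.2 hab⟩ x₀ ⟨2 / m * (b - a), by have := sub_nonneg.2 hab; positivity⟩ 0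
      ⟨2 / m, by positivity⟩ ⟨2 / m ^ 2, by positivity⟩ :=
    { lipschitzOnWith := fun t ht => (lipschitzWith_clampedField hm (hmL t ht)).lipschitzOnWith
      continuousOn := fun x _ => continuousOn_clampedField hU hL hUL x
      norm_le := fun t ht x _ => by
        rw [Real.norm_eq_abs, abs_of_pos (clampedField_pos (hUL t ht) x)]
        exact clampedField_le hm (hmL t ht) x
      mul_max_le := by simp [hab]; rfl }
  exact hPL.exists_eq_forall_mem_Icc_hasDerivWithinAt₀

end ClampedField

namespace IsForwardSol

variable {U x y : ℝ → ℝ} {a b : ℝ}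

lemma hasDerivWithinAt_clampedField {s : Set ℝ} (hx : IsForwardSol U s x) {L : ℝ → ℝ}
    (hL : ∀ t ∈ s, L t ≤ x t) : ∀ t ∈ s, HasDerivWithinAt x (clampedField U L t (x t)) s t :=
  fun t ht => by simpa only [clampedField, max_eq_left (hL t ht)] using (hx t ht).2

lemma of_clampedField {s : Set ℝ} {L : ℝ → ℝ}
    (hx : ∀ t ∈ s, HasDerivWithinAt x (clampedField U L t (x t)) s t)
    (hUL : ∀ t ∈ s, U t < L t) (hL : ∀ t ∈ s, L t ≤ x t) : IsForwardSol U s x := fun t ht =>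
  ⟨((hUL t ht).trans_le (hL t ht)).ne', by
    simpa only [clampedField, max_eq_left (hL t ht)] using hx t ht⟩

lemma strictMonoOn {s : Set ℝ} (hs : Convex ℝ s) (hx : IsForwardSol U s x)
    (hxU : ∀ t ∈ s, U t < x t) : StrictMonoOn x s :=
  strictMonoOn_of_hasDerivWithinAt_pos hs hx.continuousOn
    (fun t ht => (hx t (interior_subset ht)).2.mono interior_subset)
    fun t ht => div_pos two_pos (sub_pos.2 (hxU t (interior_subset ht)))

-- Away from `U`, the Loewner field agrees with a globally Lipschitz one.
lemma le_of_le (hU : ContinuousOn U (Icc a b)) (hx : IsForwardSol U (Icc a b) x)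
    (hy : IsForwardSol U (Icc a b) y) (hxU : ∀ t ∈ Icc a b, U t < x t)
    (hyU : ∀ t ∈ Icc a b, U t < y t)
    (hxy : x a ≤ y a) : ∀ t ∈ Icc a b, x t ≤ y t := by
  obtain ⟨m, hm, hmU⟩ := exists_pos_add_le_of_forall_lt hU
    (hx.continuousOn.inf hy.continuousOn) fun t ht => lt_min (hxU t ht) (hyU t ht)
  exact ODE_solution_le_of_le (v := clampedField U fun t => U t + m)
    (fun t _ => lipschitzWith_clampedField hm le_rfl)
    (hx.hasDerivWithinAt_clampedField fun t ht => (hmU t ht).trans (min_le_left _ _))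
    (hy.hasDerivWithinAt_clampedField fun t ht => (hmU t ht).trans (min_le_right _ _)) hxy

lemma sub_le_sub_of_le (hU : ContinuousOn U (Icc a b)) (hx : IsForwardSol U (Icc a b) x)
    (hy : IsForwardSol U (Icc a b) y) (hxU : ∀ t ∈ Icc a b, U t < x t)
    (hyU : ∀ t ∈ Icc a b, U t < y t)
    (hxy : x a ≤ y a) : ∀ t ∈ Icc a b, y t - x t ≤ y a - x a := by
  have hle := le_of_le hU hx hy hxU hyU hxy
  have hanti : AntitoneOn (fun t => y t - x t) (Icc a b) := by
    refine antitoneOn_of_hasDerivWithinAt_nonpos (convex_Icc a b)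
      (hy.continuousOn.sub hx.continuousOn)
      (fun t ht => ((hy t (interior_subset ht)).2.sub (hx t (interior_subset ht)).2).mono
        interior_subset) fun t ht => ?_
    replace ht := interior_subset ht
    have := div_le_div_of_nonneg_left zero_le_two (sub_pos.2 (hxU t ht))
      (sub_le_sub_right (hle t ht) (U t))
    linarith
  exact fun t ht => hanti (left_mem_Icc.2 (ht.1.trans ht.2)) ht ht.1

lemma abs_sub_le (hU : ContinuousOn U (Icc a b)) (hx : IsForwardSol U (Icc a b) x)
    (hy : IsForwardSol U (Icc a b) y) (hxU : ∀ t ∈ Icc a b, U t < x t)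
    (hyU : ∀ t ∈ Icc a b, U t < y t) :
    ∀ t ∈ Icc a b, |y t - x t| ≤ |y a - x a| := by
  intro t ht
  rcases le_total (x a) (y a) with hxy | hyx
  · rw [abs_of_nonneg (sub_nonneg.2 (le_of_le hU hx hy hxU hyU hxy t ht)),
      abs_of_nonneg (sub_nonneg.2 hxy)]
    exact sub_le_sub_of_le hU hx hy hxU hyU hxy t ht
  · rw [abs_sub_comm, abs_of_nonneg (sub_nonneg.2 (le_of_le hU hy hx hyU hxU hyx t ht)),
      abs_sub_comm, abs_of_nonneg (sub_nonneg.2 hyx)]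
    exact sub_le_sub_of_le hU hy hx hyU hxU hyx t ht

-- A solution within `δ` of `U` moves with speed at least `2 / δ`.
lemma mul_sub_le_of_le_add {δ : ℝ} (hab : a ≤ b) (hx : IsForwardSol U (Icc a b) x)
    (hxU : ∀ t ∈ Icc a b, U t < x t ∧ x t ≤ U t + δ) : 2 * (b - a) ≤ δ * (U b - U a + δ) := by
  have ha := hxU a (left_mem_Icc.2 hab)
  have hb := hxU b (right_mem_Icc.2 hab)
  have hδ : 0 < δ := by linarith
  have hmono : MonotoneOn (fun t => x t - 2 / δ * t) (Icc a b) := by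
    refine monotoneOn_of_hasDerivWithinAt_nonneg (convex_Icc a b)
      (hx.continuousOn.sub (continuousOn_const.mul continuousOn_id))
      (fun t ht => ((hx t (interior_subset ht)).2.sub
        ((hasDerivWithinAt_id t _).const_mul (2 / δ))).mono interior_subset) fun t ht => ?_
    obtain ⟨h₁, h₂⟩ := hxU t (interior_subset ht)
    have := div_le_div_of_nonneg_left zero_le_two (sub_pos.2 h₁) (show x t - U t ≤ δ by linarith)
    linarith
  have h := hmono (left_mem_Icc.2 hab) (right_mem_Icc.2 hab) hab
  calc 2 * (b - a) = δ * (2 / δ * (b - a)) := by field_simp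
    _ ≤ δ * (U b - U a + δ) := by gcongr; dsimp only at h; linarith

end IsForwardSol

def IsForwardSolFamily (U : ℝ → ℝ) (τ T : ℝ) (z : Ioi (U τ) → ℝ → ℝ) : Prop :=
  ∀ p, z p τ = p ∧ IsForwardSol U (Icc τ T) (z p)

namespace IsForwardSolFamily

variable {U : ℝ → ℝ} {τ T : ℝ} {z : Ioi (U τ) → ℝ → ℝ}

lemma lt_apply (hz : IsForwardSolFamily U τ T z) (hU : ContinuousOn U (Icc τ T))
    (p : Ioi (U τ)) : ∀ t ∈ Icc τ T, U t < z p t := fun t ht =>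
  (hz p).2.forall_lt_of_lt ordConnected_Icc hU (left_mem_Icc.2 (ht.1.trans ht.2))
    (by rw [(hz p).1]; exact p.2) t ht

lemma apply_le_apply (hz : IsForwardSolFamily U τ T z) (hU : ContinuousOn U (Icc τ T))
    {p q : Ioi (U τ)} (hpq : (p : ℝ) ≤ q) : ∀ t ∈ Icc τ T, z p t ≤ z q t :=
  (hz p).2.le_of_le hU (hz q).2 (hz.lt_apply hU p) (hz.lt_apply hU q)
    (by rw [(hz p).1, (hz q).1]; exact hpq)

lemma le_iInf (hz : IsForwardSolFamily U τ T z) (hU : ContinuousOn U (Icc τ T)) {t : ℝ}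
    (ht : t ∈ Icc τ T) : U t ≤ ⨅ p, z p t :=
  le_ciInf fun p => (hz.lt_apply hU p t ht).le

lemma iInf_le (hz : IsForwardSolFamily U τ T z) (hU : ContinuousOn U (Icc τ T)) {t : ℝ}
    (ht : t ∈ Icc τ T) (p : Ioi (U τ)) : ⨅ q, z q t ≤ z p t :=
  ciInf_le ⟨U t, forall_mem_range.2 fun q => (hz.lt_apply hU q t ht).le⟩ p

lemma apply_sub_iInf_le (hz : IsForwardSolFamily U τ T z) (hU : ContinuousOn U (Icc τ T))
    {a t : ℝ} (ha : a ∈ Icc τ T) (ht : t ∈ Icc a T) (p : Ioi (U τ)) :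
    z p t - ⨅ q, z q t ≤ z p a - ⨅ q, z q a := by
  have hsub : Icc a T ⊆ Icc τ T := Icc_subset_Icc_left ha.1
  suffices ∀ q, z p t - (z p a - ⨅ q, z q a) ≤ z q t by linarith [le_ciInf this]
  intro q
  rcases le_total (q : ℝ) p with hqp | hpq
  · have := ((hz q).2.mono hsub).sub_le_sub_of_le (hU.mono hsub) ((hz p).2.mono hsub)
      (fun s hs => hz.lt_apply hU q s (hsub hs)) (fun s hs => hz.lt_apply hU p s (hsub hs))
      (hz.apply_le_apply hU hqp a ha) t ht
    linarith [hz.iInf_le hU ha q]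
  · linarith [hz.apply_le_apply hU hpq t (hsub ht), hz.iInf_le hU ha p]

lemma tendsto_iInf (hz : IsForwardSolFamily U τ T z) (hU : ContinuousOn U (Icc τ T))
    (hτT : τ < T) : Tendsto (fun t => ⨅ p, z p t) (𝓝[>] τ) (𝓝 (U τ)) := by
  have hIcc : Icc τ T ∈ 𝓝[>] τ := Icc_mem_nhdsGT hτT
  have hle : 𝓝[>] τ ≤ 𝓝[Icc τ T] τ := nhdsWithin_le_of_mem hIcc
  have hτ : τ ∈ Icc τ T := left_mem_Icc.2 hτT.le
  refine tendsto_order.2 ⟨fun c hc => ?_, fun c hc => ?_⟩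
  · filter_upwards [hle ((hU τ hτ).tendsto (Ioi_mem_nhds hc)), hIcc] with t h₁ h₂
    exact h₁.trans_le (hz.le_iInf hU h₂)
  · let p : Ioi (U τ) := ⟨(U τ + c) / 2, by simp only [mem_Ioi]; linarith⟩
    have hpc : z p τ < c := by rw [(hz p).1]; simp only [p]; linarith
    filter_upwards [hle (((hz p).2.continuousOn τ hτ).tendsto (Iio_mem_nhds hpc)), hIcc]
      with t h₁ h₂
    exact (hz.iInf_le hU h₂ p).trans_lt h₁

lemma eqOn_iInf (hz : IsForwardSolFamily U τ T z) (hU : ContinuousOn U (Icc τ T)) {a : ℝ}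
    (ha : a ∈ Icc τ T) {q : ℝ → ℝ} (hq : IsForwardSol U (Icc a T) q)
    (hqa : q a = ⨅ p, z p a) : ∀ t ∈ Icc a T, q t = ⨅ p, z p t := by
  have hsub : Icc a T ⊆ Icc τ T := Icc_subset_Icc_left ha.1
  have haT : a ∈ Icc a T := left_mem_Icc.2 ha.2
  have hqU : ∀ t ∈ Icc a T, U t < q t := hq.forall_lt_of_lt ordConnected_Icc (hU.mono hsub) haT
    (lt_of_le_of_ne (hqa ▸ hz.le_iInf hU ha) (hq a haT).1.symm)
  have hzU p : ∀ t ∈ Icc a T, U t < z p t := fun t ht => hz.lt_apply hU p t (hsub ht)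
  have hqz p : ∀ t ∈ Icc a T, q t ≤ z p t := hq.le_of_le (hU.mono hsub) ((hz p).2.mono hsub)
    hqU (hzU p) (hqa ▸ hz.iInf_le hU ha p)
  intro t ht
  refine le_antisymm (le_ciInf fun p => hqz p t ht) (le_of_forall_pos_lt_add fun η hη => ?_)
  obtain ⟨p, hp⟩ := exists_lt_of_ciInf_lt (lt_add_of_pos_right (⨅ p, z p a) hη)
  have := hq.sub_le_sub_of_le (hU.mono hsub) ((hz p).2.mono hsub) hqU (hzU p) (hqz p a haT) t ht
  linarith [hz.iInf_le hU (hsub ht) p]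

lemma lt_iInf (hz : IsForwardSolFamily U τ T z) (hU : ContinuousOn U (Icc τ T))
    (hex : ∀ a ∈ Ioo τ T, ∀ x₀, U a < x₀ → ∃ q, q a = x₀ ∧ IsForwardSol U (Icc a T) q) :
    ∀ t ∈ Ioc τ T, U t < ⨅ p, z p t := by
  intro b hb
  by_contra! hbU
  set a := (τ + b) / 2 with ha
  have hab : a < b := by linarith [hb.1]
  have hsub : Icc a b ⊆ Icc τ T := Icc_subset_Icc (by linarith [hb.1]) hb.2
  -- Where the envelope leaves `U`, it is a solution, and solutions never reach `U`.
  have hflat : ∀ u ∈ Icc a b, ⨅ p, z p u = U u := by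
    intro u hu
    refine le_antisymm (not_lt.1 fun hUu => ?_) (hz.le_iInf hU (hsub hu))
    rcases hu.2.eq_or_lt with rfl | hub
    · exact hbU.not_gt hUu
    obtain ⟨q, hqu, hq⟩ := hex u ⟨by linarith [hu.1, hb.1], hub.trans_le hb.2⟩ _ hUu
    have hbq := hz.eqOn_iInf hU (hsub hu) hq hqu b ⟨hu.2, hb.2⟩
    exact (hq b ⟨hub.le, hb.2⟩).1 (hbq.trans (hbU.antisymm (hz.le_iInf hU (hsub ⟨hab.le, le_rfl⟩))))
  obtain ⟨δ, hδ, hδ₀⟩ : ∃ δ, δ * (U b - U a + δ) < 2 * (b - a) ∧ 0 < δ := by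
    have : Tendsto (fun δ : ℝ => δ * (U b - U a + δ)) (𝓝[>] 0) (𝓝 0) := by
      refine Tendsto.mono_left ?_ nhdsWithin_le_nhds
      exact (by fun_prop : Continuous fun δ : ℝ => δ * (U b - U a + δ)).tendsto' 0 0 (by simp)
    exact ((this.eventually (gt_mem_nhds (by linarith))).and self_mem_nhdsWithin).exists
  obtain ⟨p, hp⟩ := exists_lt_of_ciInf_lt (lt_add_of_pos_right (⨅ p, z p a) hδ₀)
  have hclose : ∀ t ∈ Icc a b, U t < z p t ∧ z p t ≤ U t + δ := fun t ht =>
    ⟨hz.lt_apply hU p t (hsub ht), by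
      linarith [hz.apply_sub_iInf_le hU (hsub (left_mem_Icc.2 hab.le)) ⟨ht.1, ht.2.trans hb.2⟩ p,
        hflat t ht, hflat a (left_mem_Icc.2 hab.le)]⟩
  linarith [((hz p).2.mono hsub).mul_sub_le_of_le_add hab.le hclose]

lemma isForwardSol_iInf (hz : IsForwardSolFamily U τ T z) (hU : ContinuousOn U (Icc τ T))
    (hex : ∀ a ∈ Ioo τ T, ∀ x₀, U a < x₀ → ∃ q, q a = x₀ ∧ IsForwardSol U (Icc a T) q) :
    IsForwardSol U (Ioc τ T) fun t => ⨅ p, z p t := by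
  intro u hu
  have hpos := hz.lt_iInf hU hex
  set a := (τ + u) / 2 with ha
  have haI : a ∈ Ioo τ T := ⟨by linarith [hu.1], by linarith [hu.1, hu.2]⟩
  have hau : a < u := by linarith [hu.1]
  have huI : u ∈ Icc a T := ⟨hau.le, hu.2⟩
  obtain ⟨q, hqa, hq⟩ := hex a haI _ (hpos a ⟨haI.1, haI.2.le⟩)
  have heq := hz.eqOn_iInf hU (Ioo_subset_Icc_self haI) hq hqa
  have hZ := (hq u huI).2.congr_of_mem (fun t ht => (heq t ht).symm) huI
  rw [heq u huI] at hZ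
  exact ⟨(hpos u hu).ne', hZ.mono_of_mem_nhdsWithin
    (mem_nhdsWithin.2 ⟨Ioi a, isOpen_Ioi, hau, fun v hv => ⟨hv.1.le, hv.2.2⟩⟩)⟩

end IsForwardSolFamily

namespace IsEmanating

variable {U X Y : ℝ → ℝ} {τ T : ℝ}

lemma neg (hX : IsEmanating U τ T X) : IsEmanating (-U) τ T (-X) :=
  ⟨hX.1.neg, hX.2.neg⟩

lemma forall_lt_of_lt (hU : ContinuousOn U (Icc τ T)) (hX : IsEmanating U τ T X)
    (hτT : τ < T) (hXT : U T < X T) : ∀ t ∈ Ioc τ T, U t < X t :=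
  hX.1.forall_lt_of_lt ordConnected_Ioc (hU.mono Ioc_subset_Icc_self) (right_mem_Ioc.2 hτT) hXT

lemma eqOn (hU : ContinuousOn U (Icc τ T)) (hX : IsEmanating U τ T X)
    (hY : IsEmanating U τ T Y) (hXU : ∀ t ∈ Ioc τ T, U t < X t)
    (hYU : ∀ t ∈ Ioc τ T, U t < Y t) : EqOn X Y (Ioc τ T) := by
  intro t ht
  have hlim : Tendsto (fun a => |Y a - X a|) (𝓝[>] τ) (𝓝 0) := by
    simpa using (hY.2.sub hX.2).abs
  have hev : ∀ᶠ a in 𝓝[>] τ, |Y t - X t| ≤ |Y a - X a| := by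
    filter_upwards [Ioo_mem_nhdsGT ht.1] with a ha
    have hsub : Icc a T ⊆ Ioc τ T := fun s hs => ⟨ha.1.trans_le hs.1, hs.2⟩
    exact IsForwardSol.abs_sub_le (hU.mono (Icc_subset_Icc_left ha.1.le)) (hX.1.mono hsub)
      (hY.1.mono hsub) (fun s hs => hXU s (hsub hs)) (fun s hs => hYU s (hsub hs)) t
      ⟨ha.2.le, ht.2⟩
  have := ge_of_tendsto hlim hev
  rw [abs_nonpos_iff, sub_eq_zero] at this
  exact this.symm

lemma lt_apply_of_mem_Icc (hX : IsEmanating U τ T X) (hXU : ∀ t ∈ Ioc τ T, U t < X t) {t : ℝ}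
    (ht : t ∈ Ioc τ T) : ∀ s ∈ Icc τ t, U s < X t := by
  have hmono := hX.1.strictMonoOn (convex_Ioc τ T) hXU
  set t' := (τ + t) / 2 with ht'
  have ht'I : t' ∈ Ioc τ T := ⟨by linarith [ht.1], by linarith [ht.1, ht.2]⟩
  have hτ : U τ ≤ X t' := le_of_tendsto hX.2 <| by
    filter_upwards [Ioo_mem_nhdsGT ht'I.1] with s hs
    exact hmono.monotoneOn ⟨hs.1, hs.2.le.trans ht'I.2⟩ ht'I hs.2.le
  intro s hs
  rcases hs.1.eq_or_lt with rfl | hτs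
  · exact hτ.trans_lt (hmono ht'I ht (by linarith [ht.1]))
  · exact (hXU s ⟨hτs, hs.2.trans ht.2⟩).trans_le (hmono.monotoneOn ⟨hτs, hs.2.trans ht.2⟩ ht hs.2)

-- Run the Loewner flow with the barrier `X (max t t₁)`: it is a constant strictly between
-- `U` and `x₀` up to time `t₁`, and a solution afterwards.
lemma exists_isForwardSol_ge (hU : ContinuousOn U (Icc τ T)) (hX : IsEmanating U τ T X)
    (hXU : ∀ t ∈ Ioc τ T, U t < X t) (hτT : τ < T) {x₀ : ℝ} (hx₀ : U τ < x₀) :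
    ∃ z, z τ = x₀ ∧ IsForwardSol U (Icc τ T) z ∧ X T ≤ z T := by
  obtain ⟨t₁, hXt₁, ht₁⟩ := ((hX.2.eventually (gt_mem_nhds hx₀)).and (Ioo_mem_nhdsGT hτT)).exists
  set L := fun t => X (max t t₁) with hL
  have hLc : ContinuousOn L (Icc τ T) := hX.1.continuousOn.comp
    (continuous_id.max continuous_const).continuousOn
    fun t ht => ⟨ht₁.1.trans_le (le_max_right _ _), max_le ht.2 ht₁.2.le⟩
  have hUL : ∀ t ∈ Icc τ T, U t < L t := fun t ht => by
    rcases le_total t t₁ with h | h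
    · simpa only [hL, max_eq_right h] using hX.lt_apply_of_mem_Icc hXU ⟨ht₁.1, ht₁.2.le⟩ t ⟨ht.1, h⟩
    · simpa only [hL, max_eq_left h] using hXU t ⟨ht₁.1.trans_le h, ht.2⟩
  obtain ⟨z, hz₀, hz⟩ := exists_hasDerivWithinAt_clampedField hτT.le hU hLc hUL x₀
  have hzmono : MonotoneOn z (Icc τ T) := monotoneOn_of_hasDerivWithinAt_nonneg (convex_Icc τ T)
    (fun t ht => (hz t ht).continuousWithinAt) (fun t ht => (hz t (interior_subset ht)).mono
      interior_subset) fun t ht => (clampedField_pos (hUL t (interior_subset ht)) _).le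
  have hzL₁ : ∀ t ∈ Icc τ T, X t₁ ≤ z t := fun t ht =>
    hXt₁.le.trans (hz₀ ▸ hzmono (left_mem_Icc.2 hτT.le) ht ht.1)
  have hzL : ∀ t ∈ Icc τ T, L t ≤ z t := by
    intro t ht
    rcases le_total t t₁ with h | h
    · simpa only [hL, max_eq_right h] using hzL₁ t ht
    obtain ⟨m, hm, hmL⟩ := exists_pos_add_le_of_forall_lt hU hLc hUL
    have hsub : Icc t₁ T ⊆ Icc τ T := Icc_subset_Icc_left ht₁.1.le
    simp only [hL, max_eq_left h]
    refine ODE_solution_le_of_le (v := clampedField U L)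
      (fun s hs => lipschitzWith_clampedField hm (hmL s (hsub hs)))
      ((hX.1.mono fun s hs => ⟨ht₁.1.trans_le hs.1, hs.2⟩).hasDerivWithinAt_clampedField
        fun s hs => by simp only [hL, max_eq_left hs.1, le_refl])
      (fun s hs => (hz s (hsub hs)).mono hsub) ?_ t ⟨h, ht.2⟩
    exact hzL₁ t₁ ⟨ht₁.1.le, ht₁.2.le⟩
  refine ⟨z, hz₀, IsForwardSol.of_clampedField hz hUL hzL, ?_⟩
  simpa only [hL, max_eq_left ht₁.2.le] using hzL T (right_mem_Icc.2 hτT.le)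

end IsEmanating

lemma setOf_hitsSingularity_eq {U : ℝ → ℝ} {T s : ℝ} :
    {a | ∃ x, x 0 = a ∧ IsBackwardSol U T s x ∧ HitsSingularity U T s x} =
      {a | ∃ W, IsEmanating U (T - s) T W ∧ W T = a} := by
  have hrev : ∀ {t : ℝ}, t ∈ Ioc (T - s) T ↔ T - t ∈ Ico 0 s := fun {t} => by
    simp only [mem_Ioc, mem_Ico]; constructor <;> intro h <;> constructor <;> linarith [h.1, h.2]
  have hGT : Tendsto (T - ·) (𝓝[>] (T - s)) (𝓝[<] s) := by
    have := (continuous_sub_left T).continuousWithinAt.tendsto_nhdsWithin (x := T - s)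
      (t := Iio (T - (T - s))) fun t (ht : T - s < t) => sub_lt_sub_left ht T
    rwa [sub_sub_cancel] at this
  have hLT : Tendsto (T - ·) (𝓝[<] s) (𝓝[>] (T - s)) :=
    (continuous_sub_left T).continuousWithinAt.tendsto_nhdsWithin
      fun t (ht : t < s) => sub_lt_sub_left ht T
  ext a
  constructor
  · rintro ⟨x, rfl, hx, hxs⟩
    refine ⟨fun u => x (T - u), ⟨fun u hu => ?_, hxs.comp hGT⟩, by simp⟩
    obtain ⟨hne, hder⟩ := hx (T - u) (hrev.1 hu)
    rw [sub_sub_cancel] at hne hder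
    refine ⟨hne, ?_⟩
    simpa [neg_div] using hder.comp_const_sub_of_mapsTo fun v hv => hrev.1 hv
  · rintro ⟨W, ⟨hW, hWs⟩, rfl⟩
    refine ⟨fun t => W (T - t), by simp, fun t ht => ?_, hWs.comp hLT⟩
    have ht' : T - t ∈ Ioc (T - s) T := hrev.2 (by rwa [sub_sub_cancel])
    refine ⟨(hW _ ht').1, ?_⟩
    simpa [neg_div] using (hW _ ht').2.comp_const_sub_of_mapsTo fun v hv =>
      hrev.2 (by rwa [sub_sub_cancel])

lemma setOf_isEmanating_eq {U X Y : ℝ → ℝ} {τ T : ℝ} (hU : ContinuousOn U (Icc τ T))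
    (hτT : τ < T) (hX : IsEmanating U τ T X) (hXU : ∀ t ∈ Ioc τ T, U t < X t)
    (hY : IsEmanating (-U) τ T Y) (hYU : ∀ t ∈ Ioc τ T, -U t < Y t) :
    {a | ∃ W, IsEmanating U τ T W ∧ W T = a} = {-Y T, X T} := by
  have hT : T ∈ Ioc τ T := right_mem_Ioc.2 hτT
  ext a
  constructor
  · rintro ⟨W, hW, rfl⟩
    rcases lt_or_gt_of_ne (hW.1 T hT).1 with hlt | hgt
    · left
      have := hW.neg.eqOn hU.neg hY (hW.neg.forall_lt_of_lt hU.neg hτT (neg_lt_neg hlt)) hYU hT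
      simp only [Pi.neg_apply] at this
      linarith
    · exact Or.inr (hW.eqOn hU hX (hW.forall_lt_of_lt hU hτT hgt) hXU hT)
  · rintro (rfl | rfl)
    exacts [⟨-Y, by simpa using hY.neg, rfl⟩, ⟨X, hX, rfl⟩]

namespace EscapesUniformly

variable {U : ℝ → ℝ} {T : ℝ}

lemma neg (hE : EscapesUniformly U T) : EscapesUniformly (-U) T := by
  intro τ hτ
  obtain ⟨ε, hε, h⟩ := hE τ hτ
  refine ⟨ε, hε, fun x₀ hx₀ => ?_⟩
  obtain ⟨x, hxτ, hx, hxT⟩ := h (-x₀) fun h => hx₀ (by simp [← h])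
  refine ⟨-x, by simp [hxτ], hx.neg, ?_⟩
  rwa [Pi.neg_apply, Pi.neg_apply, neg_sub_neg, abs_sub_comm]

lemma exists_isEmanating (hU : ContinuousOn U (Icc 0 T)) (hE : EscapesUniformly U T) {τ : ℝ}
    (hτ : τ ∈ Ico 0 T) : ∃ X, IsEmanating U τ T X ∧ ∀ t ∈ Ioc τ T, U t < X t := by
  obtain ⟨_, _, hsol⟩ := hE τ hτ
  choose z hz₀ hz _ using fun p : Ioi (U τ) => hsol p p.2.ne'
  have hfam : IsForwardSolFamily U τ T z := fun p => ⟨hz₀ p, hz p⟩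
  have hUτ : ContinuousOn U (Icc τ T) := hU.mono (Icc_subset_Icc_left hτ.1)
  have hex : ∀ a ∈ Ioo τ T, ∀ x₀, U a < x₀ → ∃ q, q a = x₀ ∧ IsForwardSol U (Icc a T) q := by
    intro a ha x₀ hx₀
    obtain ⟨_, _, h⟩ := hE a ⟨hτ.1.trans ha.1.le, ha.2⟩
    obtain ⟨q, hqa, hq, -⟩ := h x₀ hx₀.ne'
    exact ⟨q, hqa, hq⟩
  exact ⟨_, ⟨hfam.isForwardSol_iInf hUτ hex, hfam.tendsto_iInf hUτ hτ.2⟩,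
    hfam.lt_iInf hUτ hex⟩

end EscapesUniformly

lemma exists_escape_of_isEmanating {U X Y : ℝ → ℝ} {τ T : ℝ} (hU : ContinuousOn U (Icc τ T))
    (hτT : τ < T) (hX : IsEmanating U τ T X) (hXT : U T < X T) (hY : IsEmanating U τ T Y)
    (hYT : Y T < U T) : ∃ ε > 0, ∀ x₀, x₀ ≠ U τ →
      ∃ x, x τ = x₀ ∧ IsForwardSol U (Icc τ T) x ∧ ε < |x T - U T| := by
  refine ⟨min (X T - U T) (U T - Y T) / 2, half_pos (lt_min (sub_pos.2 hXT) (sub_pos.2 hYT)),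
    fun x₀ hx₀ => ?_⟩
  have hmin := min_le_left (X T - U T) (U T - Y T)
  have hmin' := min_le_right (X T - U T) (U T - Y T)
  rcases lt_or_gt_of_ne hx₀ with hlt | hgt
  · obtain ⟨z, hz₀, hz, hzT⟩ := hY.neg.exists_isForwardSol_ge hU.neg
      (hY.neg.forall_lt_of_lt hU.neg hτT (neg_lt_neg hYT)) hτT (neg_lt_neg hlt)
    refine ⟨-z, by simp [hz₀], hz.of_neg, ?_⟩
    simp only [Pi.neg_apply] at hzT ⊢
    rw [abs_of_neg (by linarith)]
    linarith
  · obtain ⟨z, hz₀, hz, hzT⟩ :=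
      hX.exists_isForwardSol_ge hU (hX.forall_lt_of_lt hU hτT hXT) hτT hgt
    refine ⟨z, hz₀, hz, ?_⟩
    rw [abs_of_pos (by linarith)]
    linarith

theorem stmt_2_general (T : ℝ) (U : ℝ → ℝ) (hU : ContinuousOn U (Set.Icc 0 T)) :
    Welded U T ↔
    ∀ τ ∈ Set.Ico (0 : ℝ) T, ∃ ε > 0, ∀ x₀ : ℝ, x₀ ≠ U τ →
      ∃ x : ℝ → ℝ, x τ = x₀ ∧
        (∀ t ∈ Set.Icc τ T, x t ≠ U t ∧
          HasDerivWithinAt x (2 / (x t - U t)) (Set.Icc τ T) t) ∧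
        ε < |x T - U T| := by
  change Welded U T ↔ EscapesUniformly U T
  constructor
  · intro hW τ hτ
    obtain ⟨y₀, x₀, hy₀, hx₀, hset⟩ := hW (T - τ) ⟨by linarith [hτ.2], by linarith [hτ.1]⟩
    rw [setOf_hitsSingularity_eq, sub_sub_cancel] at hset
    have hX : x₀ ∈ {a | ∃ W, IsEmanating U τ T W ∧ W T = a} := by rw [hset]; simp
    have hY : y₀ ∈ {a | ∃ W, IsEmanating U τ T W ∧ W T = a} := by rw [hset]; simp
    obtain ⟨X, hX, rfl⟩ := hX
    obtain ⟨Y, hY, rfl⟩ := hY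
    exact exists_escape_of_isEmanating (hU.mono (Icc_subset_Icc_left hτ.1)) hτ.2 hX hx₀ hY hy₀
  · intro hE s hs
    have hτ : T - s ∈ Ico 0 T := ⟨by linarith [hs.2], by linarith [hs.1]⟩
    obtain ⟨X, hX, hXU⟩ := hE.exists_isEmanating hU hτ
    obtain ⟨Y, hY, hYU⟩ := hE.neg.exists_isEmanating hU.neg hτ
    have hT : T ∈ Ioc (T - s) T := right_mem_Ioc.2 hτ.2
    refine ⟨-Y T, X T, by linarith [hYU T hT, show (-U) T = -U T from rfl], hXU T hT, ?_⟩
    rw [setOf_hitsSingularity_eq,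
      setOf_isEmanating_eq (hU.mono (Icc_subset_Icc_left hτ.1)) hτ.2 hX hXU hY hYU]

/-- `U` is welded on `[0,T]` if and only if for every `τ ∈ [0,T)`
there is `ε > 0` such that every forward solution started at time `τ` from a point
`x₀ ≠ U τ` exists up to time `T`, never hits the driving function, and satisfies
`|x T − U T| > ε`. -/
theorem stmt_2 (T : ℝ) (hT : 0 < T) (U : ℝ → ℝ) (hU : ContinuousOn U (Set.Icc 0 T)) :
    Welded U T ↔
    ∀ τ ∈ Set.Ico (0 : ℝ) T, ∃ ε > 0, ∀ x₀ : ℝ, x₀ ≠ U τ →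
      ∃ x : ℝ → ℝ, x τ = x₀ ∧
        (∀ t ∈ Set.Icc τ T, x t ≠ U t ∧
          HasDerivWithinAt x (2 / (x t - U t)) (Set.Icc τ T) t) ∧
        ε < |x T - U T| :=
  stmt_2_general T U hU
end

section
/- Let U : [0,1] → ℝ be continuous. Suppose there exist two increasing sequences (s_n) and (t_n) of positive numbers with s_n → 1 and t_n → 1 such that U(s_n) ≤ U(1) ≤ U(t_n) for all n. If for every T' ∈ (0,1) the restriction of U to [0,T'] is welded on [0,T'], then U is welded on [0,1]. -/
/-!
For `σ ∈ (0, 1]` and every `δ ∈ (0, σ)`, weldedness on `[0, 1 - δ]` gives a backward solution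
above the driving function that hits the singularity at time `σ - δ`. Two solutions above the
driving function hitting the singularity at the same time coincide, so these solutions are time
shifts of each other and glue to one solution on `(0, σ)`. It is decreasing and bounded, hence
extends to time `0` with a value `x₀ ≥ U 1`, and the points `tₙ` with `U 1 ≤ U tₙ` make this
inequality strict. Solutions below the driving function come from the same construction for `-U`
with the points `sₙ`, and uniqueness shows that these two initial values are the only ones.
-/

open Set Filter Topology Function
open scoped Pointwise

def hittingValues (U : ℝ → ℝ) (T s : ℝ) : Set ℝ :=
  {a | ∃ x : ℝ → ℝ, x 0 = a ∧ IsBackwardSol U T s x ∧ HitsSingularity U T s x}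

def IsUpperHittingSol (U : ℝ → ℝ) (T s : ℝ) (x : ℝ → ℝ) : Prop :=
  IsBackwardSol U T s x ∧ HitsSingularity U T s x ∧ ∀ t ∈ Ico 0 s, U (T - t) < x t

lemma ContinuousOn.comp_const_sub_Ico {U : ℝ → ℝ} {T s : ℝ} (hU : ContinuousOn U (Icc 0 T))
    (hs : s ≤ T) : ContinuousOn (fun t => U (T - t)) (Ico 0 s) :=
  hU.comp (continuousOn_const.sub continuousOn_id) fun t ht =>
    ⟨by linarith [ht.2], by linarith [ht.1]⟩

lemma tendsto_sub_const_nhdsLT (a ε : ℝ) :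
    Tendsto (· - ε) (𝓝[<] (a + ε)) (𝓝[<] a) :=
  tendsto_nhdsWithin_iff.2
    ⟨by simpa using ((continuous_sub_right ε).tendsto (a + ε)).mono_left nhdsWithin_le_nhds,
      eventually_nhdsWithin_of_forall fun _ hr => by simpa using sub_lt_sub_right hr ε⟩

section BackwardSol

variable {U : ℝ → ℝ} {T s : ℝ} {x y : ℝ → ℝ}

lemma IsBackwardSol.continuousOn_s4 (h : IsBackwardSol U T s x) : ContinuousOn x (Ico 0 s) :=
  fun t ht => (h t ht).2.continuousWithinAt

lemma IsBackwardSol.hasDerivAt (h : IsBackwardSol U T s x) {t : ℝ} (ht : t ∈ Ioo 0 s) :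
    HasDerivAt x (-2 / (x t - U (T - t))) t :=
  (h t (Ioo_subset_Ico_self ht)).2.hasDerivAt (Ico_mem_nhds ht.1 ht.2)

lemma IsBackwardSol.lt_of_lt (hU : ContinuousOn (fun t => U (T - t)) (Ico 0 s))
    (h : IsBackwardSol U T s x) (h0 : U T < x 0) {t : ℝ} (ht : t ∈ Ico 0 s) :
    U (T - t) < x t := by
  by_contra! hle
  have hsub : Icc 0 t ⊆ Ico 0 s := Icc_subset_Ico_right ht.2
  have hzero : (0 : ℝ) ∈ Icc (x t - U (T - t)) (x 0 - U (T - 0)) :=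
    ⟨by linarith, by rw [sub_zero]; linarith⟩
  obtain ⟨c, hc, hc0⟩ := intermediate_value_Icc' ht.1 ((h.continuousOn_s4.sub hU).mono hsub) hzero
  exact (h c (hsub hc)).1 (sub_eq_zero.1 hc0)

lemma IsBackwardSol.isUpperHittingSol (hU : ContinuousOn (fun t => U (T - t)) (Ico 0 s))
    (h : IsBackwardSol U T s x) (hh : HitsSingularity U T s x) (h0 : U T < x 0) :
    IsUpperHittingSol U T s x :=
  ⟨h, hh, fun _ ht => h.lt_of_lt hU h0 ht⟩

lemma IsBackwardSol.neg (h : IsBackwardSol U T s x) : IsBackwardSol (-U) T s (-x) := by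
  intro t ht
  obtain ⟨hne, hd⟩ := h t ht
  refine ⟨fun h' => hne (neg_injective h'), ?_⟩
  have hval : -(-2 / (x t - U (T - t))) = -2 / ((-x) t - (-U) (T - t)) := by
    simp only [Pi.neg_apply]
    rw [show -x t - -U (T - t) = -(x t - U (T - t)) by ring, div_neg]
  exact hval ▸ hd.neg

lemma HitsSingularity.neg (h : HitsSingularity U T s x) : HitsSingularity (-U) T s (-x) :=
  Tendsto.neg h

lemma IsBackwardSol.comp_add_const (h : IsBackwardSol U T s x) {ε : ℝ} (hε : 0 ≤ ε) :
    IsBackwardSol U (T - ε) (s - ε) (fun t => x (t + ε)) := by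
  intro t ht
  have hmaps : MapsTo (· + ε) (Ico 0 (s - ε)) (Ico 0 s) := fun r hr =>
    ⟨by linarith [hr.1], by linarith [hr.2]⟩
  obtain ⟨hne, hd⟩ := h (t + ε) (hmaps ht)
  rw [show T - ε - t = T - (t + ε) by ring]
  refine ⟨hne, ?_⟩
  have := hd.comp t ((hasDerivAt_id t).add_const ε).hasDerivWithinAt hmaps
  rwa [mul_one] at this

lemma HitsSingularity.comp_sub_const (h : HitsSingularity U T s x) (ε : ℝ) :
    HitsSingularity U (T + ε) (s + ε) (fun t => x (t - ε)) := by
  rw [HitsSingularity, show T + ε - (s + ε) = T - s by ring]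
  exact h.comp (tendsto_sub_const_nhdsLT s ε)

lemma IsUpperHittingSol.comp_add_const (h : IsUpperHittingSol U T s x) {ε : ℝ} (hε : 0 ≤ ε) :
    IsUpperHittingSol U (T - ε) (s - ε) (fun t => x (t + ε)) := by
  refine ⟨h.1.comp_add_const hε, by simpa [← sub_eq_add_neg] using h.2.1.comp_sub_const (-ε),
    fun t ht => ?_⟩
  rw [show T - ε - t = T - (t + ε) by ring]
  exact h.2.2 _ ⟨by linarith [ht.1], by linarith [ht.2]⟩

/-- `(y - x)²` is nondecreasing, because `-2 / (· - u)` is increasing on `(u, ∞)`, and it tends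
to `0` at the hitting time. -/
lemma IsUpperHittingSol.eqOn (hx : IsUpperHittingSol U T s x) (hy : IsUpperHittingSol U T s y) :
    EqOn x y (Ico 0 s) := by
  set φ : ℝ → ℝ := (y - x) ^ 2
  have hφ' : ∀ r ∈ Ioo 0 s, HasDerivAt φ
      (4 * (y r - x r) ^ 2 / ((x r - U (T - r)) * (y r - U (T - r)))) r := fun r hr => by
    have ha := (sub_pos.2 (hx.2.2 r (Ioo_subset_Ico_self hr))).ne'
    have hb := (sub_pos.2 (hy.2.2 r (Ioo_subset_Ico_self hr))).ne'
    refine (((hy.1.hasDerivAt hr).sub (hx.1.hasDerivAt hr)).pow 2).congr_deriv ?_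
    simp only [Pi.sub_apply]
    field_simp
    ring
  have hφ'_nonneg : ∀ r ∈ Ioo 0 s,
      0 ≤ 4 * (y r - x r) ^ 2 / ((x r - U (T - r)) * (y r - U (T - r))) := fun r hr =>
    div_nonneg (by positivity) (mul_pos (sub_pos.2 (hx.2.2 r (Ioo_subset_Ico_self hr)))
      (sub_pos.2 (hy.2.2 r (Ioo_subset_Ico_self hr)))).le
  have hmono : MonotoneOn φ (Ico 0 s) := by
    refine monotoneOn_of_deriv_nonneg (convex_Ico 0 s)
      ((hy.1.continuousOn_s4.sub hx.1.continuousOn_s4).pow 2) ?_ ?_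
    · rw [interior_Ico]
      exact fun r hr => (hφ' r hr).differentiableAt.differentiableWithinAt
    · rw [interior_Ico]
      exact fun r hr => (hφ' r hr).deriv ▸ hφ'_nonneg r hr
  have hlim : Tendsto φ (𝓝[<] s) (𝓝 0) := by
    have := (hy.2.1.sub hx.2.1).pow 2
    rwa [sub_self, zero_pow two_ne_zero] at this
  intro t ht
  have hφt : (y t - x t) ^ 2 ≤ 0 := ge_of_tendsto hlim <| by
    filter_upwards [Ioo_mem_nhdsLT ht.2] with r hr
    exact hmono ht ⟨ht.1.trans hr.1.le, hr.2⟩ hr.1.le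
  exact (sub_eq_zero.1 (pow_eq_zero_iff two_ne_zero |>.1 (hφt.antisymm (sq_nonneg _)))).symm

end BackwardSol

lemma hittingValues_neg (U : ℝ → ℝ) (T s : ℝ) :
    hittingValues (-U) T s = -hittingValues U T s := by
  ext a
  constructor
  · rintro ⟨x, rfl, hx, hxh⟩
    exact ⟨-x, by simp, by simpa using hx.neg, by simpa using hxh.neg⟩
  · rintro ⟨x, hx0, hx, hxh⟩
    exact ⟨-x, by simp [hx0], hx.neg, hxh.neg⟩

lemma Welded.neg {U : ℝ → ℝ} {T : ℝ} (h : Welded U T) : Welded (-U) T := by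
  intro s hs
  obtain ⟨x₀, y₀, hx₀, hy₀, hset⟩ := h s hs
  refine ⟨-y₀, -x₀, neg_lt_neg hy₀, neg_lt_neg hx₀, ?_⟩
  change hittingValues (-U) T s = _
  rw [hittingValues_neg, show hittingValues U T s = _ from hset, neg_insert, neg_singleton,
    pair_comm]

lemma Welded.exists_upperHittingSol {U : ℝ → ℝ} {T s : ℝ} (h : Welded U T)
    (hU : ContinuousOn (fun t => U (T - t)) (Ico 0 s)) (hs : s ∈ Ioc 0 T) :
    ∃ x, IsUpperHittingSol U T s x := by
  obtain ⟨x₀, y₀, -, hy₀, hset⟩ := h s hs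
  obtain ⟨x, rfl, hx, hxh⟩ : y₀ ∈ hittingValues U T s := by
    rw [hittingValues, hset]
    exact Or.inr rfl
  exact ⟨x, hx.isUpperHittingSol hU hxh hy₀⟩

lemma hittingValues_eq_pair {U : ℝ → ℝ} {T s : ℝ} {x y : ℝ → ℝ}
    (hU : ContinuousOn (fun t => U (T - t)) (Ico 0 s)) (hs : 0 < s)
    (hx : IsUpperHittingSol U T s x) (hy : IsUpperHittingSol (-U) T s y) :
    hittingValues U T s = {-y 0, x 0} := by
  have h0 : (0 : ℝ) ∈ Ico 0 s := ⟨le_rfl, hs⟩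
  ext a
  constructor
  · rintro ⟨z, rfl, hz, hzh⟩
    rcases lt_or_gt_of_ne (sub_zero T ▸ (hz 0 h0).1) with hlt | hgt
    · have hz' := hz.neg.isUpperHittingSol hU.neg hzh.neg (neg_lt_neg hlt)
      exact Or.inl (neg_eq_iff_eq_neg.1 (hz'.eqOn hy h0))
    · exact Or.inr ((hz.isUpperHittingSol hU hzh hgt).eqOn hx h0)
  · rintro (rfl | rfl)
    · exact ⟨-y, rfl, by simpa using hy.1.neg, by simpa using hy.2.1.neg⟩
    · exact ⟨x, rfl, hx.1, hx.2.1⟩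

section Comparison

variable {X u : ℝ → ℝ} {a b : ℝ}

lemma antitoneOn_of_hasDerivAt_neg_two_div
    (hX : ∀ r ∈ Ioo a b, HasDerivAt X (-2 / (X r - u r)) r) (hXu : ∀ r ∈ Ioo a b, u r < X r) :
    AntitoneOn X (Ioo a b) := by
  refine antitoneOn_of_deriv_nonpos (convex_Ioo a b)
    (fun r hr => (hX r hr).continuousAt.continuousWithinAt) ?_ ?_ <;> rw [interior_Ioo]
  · exact fun r hr => (hX r hr).differentiableAt.differentiableWithinAt
  · intro r hr
    rw [(hX r hr).deriv]
    exact (div_neg_of_neg_of_pos (by norm_num) (sub_pos.2 (hXu r hr))).le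

/-- `(X r - C)² + 4 r` is nondecreasing, its derivative being `4 (C - u r) / (X r - u r) ≥ 0`. -/
lemma bddAbove_image_of_hasDerivAt_neg_two_div {C : ℝ} (hab : a < b)
    (hX : ∀ r ∈ Ioo a b, HasDerivAt X (-2 / (X r - u r)) r) (hXu : ∀ r ∈ Ioo a b, u r < X r)
    (hC : ∀ r ∈ Ioo a b, u r ≤ C) :
    BddAbove (X '' Ioo a b) := by
  set φ : ℝ → ℝ := fun r => (X r - C) ^ 2 + 4 * r
  have hφ' : ∀ r ∈ Ioo a b, HasDerivAt φ (4 * (C - u r) / (X r - u r)) r := by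
    intro r hr
    have hne := (sub_pos.2 (hXu r hr)).ne'
    refine ((((hX r hr).sub_const C).pow 2).add ((hasDerivAt_id r).const_mul 4)).congr_deriv ?_
    field_simp
    ring
  have hmono : MonotoneOn φ (Ioo a b) := by
    refine monotoneOn_of_deriv_nonneg (convex_Ioo a b)
      (fun r hr => (hφ' r hr).continuousAt.continuousWithinAt) ?_ ?_ <;> rw [interior_Ioo]
    · exact fun r hr => (hφ' r hr).differentiableAt.differentiableWithinAt
    · intro r hr
      rw [(hφ' r hr).deriv]
      exact div_nonneg (by linarith [hC r hr]) (sub_pos.2 (hXu r hr)).le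
  obtain ⟨m, hm⟩ := nonempty_Ioo.2 hab
  have hleft : ∀ r ∈ Ioo a b, r ≤ m → X r ≤ C + 1 + φ m - 4 * a := fun r hr hrm => by
    have := hmono hr hm hrm
    nlinarith [hr.1, sq_nonneg (X r - C - 1)]
  refine ⟨C + 1 + φ m - 4 * a, ?_⟩
  rintro _ ⟨r, hr, rfl⟩
  rcases le_total r m with hrm | hmr
  · exact hleft r hr hrm
  · exact (antitoneOn_of_hasDerivAt_neg_two_div hX hXu hm hr hmr).trans (hleft m hm le_rfl)

lemma exists_tendsto_nhdsGT_of_hasDerivAt_neg_two_div {C : ℝ} (hab : a < b)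
    (hX : ∀ r ∈ Ioo a b, HasDerivAt X (-2 / (X r - u r)) r) (hXu : ∀ r ∈ Ioo a b, u r < X r)
    (hC : ∀ r ∈ Ioo a b, u r ≤ C) :
    ∃ x₀, Tendsto X (𝓝[>] a) (𝓝 x₀) ∧ ∀ r ∈ Ioo a b, X r ≤ x₀ := by
  have hbdd := bddAbove_image_of_hasDerivAt_neg_two_div hab hX hXu hC
  exact ⟨_, (antitoneOn_of_hasDerivAt_neg_two_div hX hXu).tendsto_nhdsWithin_Ioo_right
    (nonempty_Ioo.2 hab) hbdd, fun r hr => le_csSup hbdd (mem_image_of_mem X hr)⟩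

end Comparison

section Existence

variable {U : ℝ → ℝ} {T σ : ℝ}

lemma isUpperHittingSol_update_zero {X : ℝ → ℝ} {x₀ : ℝ} (hσ : 0 < σ)
    (hU : ContinuousOn (fun t => U (T - t)) (Ico 0 σ))
    (hX : ∀ r ∈ Ioo 0 σ, HasDerivAt X (-2 / (X r - U (T - r))) r)
    (hXU : ∀ r ∈ Ioo 0 σ, U (T - r) < X r) (hX0 : Tendsto X (𝓝[>] 0) (𝓝 x₀))
    (hXσ : Tendsto X (𝓝[<] σ) (𝓝 (U (T - σ)))) (hx₀ : U T < x₀) :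
    IsUpperHittingSol U T σ (update X 0 x₀) := by
  set Z := update X 0 x₀
  have hZ : ∀ r, 0 < r → Z r = X r := fun r hr => update_of_ne hr.ne' _ _
  have hZ' : ∀ r ∈ Ioo 0 σ, HasDerivAt Z (-2 / (Z r - U (T - r))) r := fun r hr => by
    rw [hZ r hr.1]
    exact (hX r hr).congr_of_eventuallyEq (eventually_of_mem (Ioi_mem_nhds hr.1) hZ)
  have hZU : ∀ t ∈ Ico 0 σ, U (T - t) < Z t := by
    rintro t ⟨ht0, htσ⟩
    rcases ht0.eq_or_lt with rfl | ht0
    · simpa [Z] using hx₀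
    · exact hZ t ht0 ▸ hXU t ⟨ht0, htσ⟩
  have hU0 : Tendsto (fun r => U (T - r)) (𝓝[>] 0) (𝓝 (U T)) := by
    have := (hU 0 ⟨le_rfl, hσ⟩).tendsto
    rw [sub_zero] at this
    exact this.mono_left
      (nhdsWithin_le_of_mem (mem_of_superset (Ioo_mem_nhdsGT hσ) Ioo_subset_Ico_self))
  have hZ0 : Tendsto Z (𝓝[>] 0) (𝓝 x₀) :=
    hX0.congr' (eventually_nhdsWithin_of_forall fun r hr => (hZ r hr).symm)
  have hZ'0 : HasDerivWithinAt Z (-2 / (x₀ - U T)) (Ici 0) 0 := by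
    refine hasDerivWithinAt_Ici_of_tendsto_deriv
      (fun r hr => (hZ' r hr).differentiableAt.differentiableWithinAt) ?_ (Ioo_mem_nhdsGT hσ) ?_
    · simpa [ContinuousWithinAt, Z] using
        hZ0.mono_left (nhdsWithin_mono _ Ioo_subset_Ioi_self)
    · refine (tendsto_const_nhds.div (hZ0.sub hU0) (sub_pos.2 hx₀).ne').congr' ?_
      filter_upwards [Ioo_mem_nhdsGT hσ] with r hr using (hZ' r hr).deriv.symm
  refine ⟨fun t ht => ⟨(hZU t ht).ne', ?_⟩, ?_, hZU⟩
  · rcases ht.1.eq_or_lt with rfl | ht0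
    · simpa [Z] using hZ'0.mono Ico_subset_Ici_self
    · exact (hZ' t ⟨ht0, ht.2⟩).hasDerivWithinAt
  · refine hXσ.congr' ?_
    filter_upwards [Ioo_mem_nhdsLT hσ] with r hr using (hZ r hr.1).symm

lemma upperHittingSol_shift_half_eq {Y : ℝ → ℝ → ℝ}
    (hY : ∀ δ ∈ Ioo 0 σ, IsUpperHittingSol U (T - δ) (σ - δ) (Y δ)) {δ r : ℝ}
    (hδ : δ ∈ Ioo 0 σ) (hr : r ∈ Ioo δ σ) :
    Y (r / 2) (r / 2) = Y δ (r - δ) := by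
  have hcompat : ∀ δ ∈ Ioo 0 σ, ∀ δ' ∈ Ioo 0 σ, δ ≤ δ' → ∀ r ∈ Ioo δ' σ,
      Y δ (r - δ) = Y δ' (r - δ') := by
    intro δ hδ δ' hδ' hle r hr
    have h := (hY δ hδ).comp_add_const (sub_nonneg.2 hle)
    rw [show T - δ - (δ' - δ) = T - δ' by ring, show σ - δ - (δ' - δ) = σ - δ' by ring] at h
    have := h.eqOn (hY δ' hδ') ⟨sub_nonneg.2 hr.1.le, by linarith [hr.2]⟩
    simpa only [sub_add_sub_cancel] using this
  have hr2 : r / 2 ∈ Ioo 0 σ := ⟨by linarith [hδ.1, hr.1], by linarith [hδ.1, hr.1, hr.2]⟩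
  rcases le_total δ (r / 2) with h | h
  · have := hcompat δ hδ (r / 2) hr2 h r ⟨by linarith [hδ.1], hr.2⟩
    rw [sub_half] at this
    exact this.symm
  · have := hcompat (r / 2) hr2 δ hδ h r hr
    rwa [sub_half] at this

lemma exists_solution_Ioo_of_upperHittingSol_shift {Y : ℝ → ℝ → ℝ} (hσ : 0 < σ)
    (hY : ∀ δ ∈ Ioo 0 σ, IsUpperHittingSol U (T - δ) (σ - δ) (Y δ)) :
    ∃ X : ℝ → ℝ, (∀ r ∈ Ioo 0 σ, HasDerivAt X (-2 / (X r - U (T - r))) r) ∧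
      (∀ r ∈ Ioo 0 σ, U (T - r) < X r) ∧ Tendsto X (𝓝[<] σ) (𝓝 (U (T - σ))) := by
  have hhalf : ∀ r ∈ Ioo 0 σ, r / 2 ∈ Ioo 0 σ := fun r hr =>
    ⟨half_pos hr.1, (half_lt_self hr.1).trans hr.2⟩
  refine ⟨fun r => Y (r / 2) (r / 2), fun r hr => ?_, fun r hr => ?_, ?_⟩
  · have hd := ((hY _ (hhalf r hr)).1.hasDerivAt (t := r - r / 2)
      ⟨by linarith [hr.1], by linarith [hr.2]⟩).comp_sub_const r (r / 2)
    rw [show T - r / 2 - (r - r / 2) = T - r by ring,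
      ← upperHittingSol_shift_half_eq hY (hhalf r hr) (r := r) ⟨half_lt_self hr.1, hr.2⟩] at hd
    refine hd.congr_of_eventuallyEq ?_
    filter_upwards [Ioo_mem_nhds (half_lt_self hr.1) hr.2] with r' hr'
    exact upperHittingSol_shift_half_eq hY (hhalf r hr) hr'
  · have := (hY _ (hhalf r hr)).2.2 (r / 2) ⟨by linarith [hr.1], by linarith [hr.2]⟩
    rwa [show T - r / 2 - r / 2 = T - r by ring] at this
  · have hσ2 : σ / 2 ∈ Ioo 0 σ := ⟨half_pos hσ, half_lt_self hσ⟩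
    have h := (hY _ hσ2).2.1.comp_sub_const (σ / 2)
    rw [sub_add_cancel, sub_add_cancel] at h
    refine h.congr' ?_
    filter_upwards [Ioo_mem_nhdsLT (half_lt_self hσ)] with r hr
    exact (upperHittingSol_shift_half_eq hY hσ2 hr).symm

theorem exists_upperHittingSol_of_forall_welded {t : ℕ → ℝ} (hU : ContinuousOn U (Icc 0 T))
    (ht : ∀ n, t n < T) (htlim : Tendsto t atTop (𝓝 T)) (hUt : ∀ n, U T ≤ U (t n))
    (hweld : ∀ T' ∈ Ioo 0 T, Welded U T') (hσ : σ ∈ Ioc 0 T) :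
    ∃ x, IsUpperHittingSol U T σ x := by
  have hY : ∀ δ ∈ Ioo 0 σ, ∃ y, IsUpperHittingSol U (T - δ) (σ - δ) y := fun δ hδ =>
    (hweld _ ⟨by linarith [hσ.2, hδ.2], by linarith [hδ.1]⟩).exists_upperHittingSol
      ((hU.mono (Icc_subset_Icc_right (by linarith [hδ.1]))).comp_const_sub_Ico
        (by linarith [hσ.2])) ⟨by linarith [hδ.2], by linarith [hσ.2]⟩
  choose! Y hY using hY
  obtain ⟨X, hX, hXU, hXσ⟩ := exists_solution_Ioo_of_upperHittingSol_shift hσ.1 hY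
  obtain ⟨C, hC⟩ := isCompact_Icc.bddAbove_image hU
  obtain ⟨x₀, hX0, hXx₀⟩ := exists_tendsto_nhdsGT_of_hasDerivAt_neg_two_div hσ.1 hX hXU
    fun r hr => hC (mem_image_of_mem U ⟨by linarith [hr.2, hσ.2], by linarith [hr.1]⟩)
  obtain ⟨n, hn⟩ := (htlim.eventually (lt_mem_nhds (sub_lt_self T hσ.1))).exists
  have hr : T - t n ∈ Ioo 0 σ := ⟨sub_pos.2 (ht n), by linarith⟩
  have hx₀ : U T < x₀ := calc
    U T ≤ U (T - (T - t n)) := by rw [sub_sub_cancel]; exact hUt n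
    _ < X (T - t n) := hXU _ hr
    _ ≤ x₀ := hXx₀ _ hr
  exact ⟨_, isUpperHittingSol_update_zero hσ.1 (hU.comp_const_sub_Ico hσ.2) hX hXU hX0 hXσ hx₀⟩

end Existence

theorem stmt_4_general (U : ℝ → ℝ) (hU : ContinuousOn U (Set.Icc 0 1))
    (s t : ℕ → ℝ) (hsmono : StrictMono s) (htmono : StrictMono t)
    (hslim : Filter.Tendsto s Filter.atTop (nhds 1))
    (htlim : Filter.Tendsto t Filter.atTop (nhds 1))
    (hcmp : ∀ n, U (s n) ≤ U 1 ∧ U 1 ≤ U (t n))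
    (hweld : ∀ T' ∈ Set.Ioo (0 : ℝ) 1, Welded U T') :
    Welded U 1 := by
  have hs : ∀ n, s n < 1 := fun n =>
    (hsmono n.lt_succ_self).trans_le (hsmono.monotone.ge_of_tendsto hslim _)
  have ht : ∀ n, t n < 1 := fun n =>
    (htmono n.lt_succ_self).trans_le (htmono.monotone.ge_of_tendsto htlim _)
  intro σ hσ
  have h0 : (0 : ℝ) ∈ Ico 0 σ := ⟨le_rfl, hσ.1⟩
  obtain ⟨x, hx⟩ :=
    exists_upperHittingSol_of_forall_welded hU ht htlim (fun n => (hcmp n).2) hweld hσ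
  obtain ⟨y, hy⟩ := exists_upperHittingSol_of_forall_welded (U := -U) hU.neg hs hslim
    (fun n => neg_le_neg (hcmp n).1) (fun T' hT' => (hweld T' hT').neg) hσ
  refine ⟨-y 0, x 0, ?_, ?_, hittingValues_eq_pair (hU.comp_const_sub_Ico hσ.2) hσ.1 hx hy⟩
  · simpa [neg_lt] using hy.2.2 0 h0
  · simpa using hx.2.2 0 h0

/-- (Corollary.)  If `U : [0,1] → ℝ` is continuous, welded on `[0,T']`
for all `T' ∈ (0,1)`, and there are increasing sequences `sₙ, tₙ → 1` of positive
numbers with `U(sₙ) ≤ U(1) ≤ U(tₙ)` for all `n`, then `U` is welded on `[0,1]`. -/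
theorem stmt_4 (U : ℝ → ℝ) (hU : ContinuousOn U (Set.Icc 0 1))
    (s t : ℕ → ℝ) (hsmono : StrictMono s) (htmono : StrictMono t)
    (hspos : ∀ n, 0 < s n) (htpos : ∀ n, 0 < t n)
    (hslim : Filter.Tendsto s Filter.atTop (nhds 1))
    (htlim : Filter.Tendsto t Filter.atTop (nhds 1))
    (hcmp : ∀ n, U (s n) ≤ U 1 ∧ U 1 ≤ U (t n))
    (hweld : ∀ T' ∈ Set.Ioo (0 : ℝ) 1, Welded U T') :
    Welded U 1 :=
  stmt_4_general U hU s t hsmono htmono hslim htlim hcmp hweld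
end

section
/- Let a < b be real numbers, let M ∈ ℝ, and let x : [a,b] → ℝ be differentiable with x(t) < M for all t ∈ [a,b] and x'(t) ≤ 2/(x(t) − M) for all t ∈ [a,b]. Then for every t ∈ [a,b]: x(t) ≤ M − √((M − x(a))² + 4(t − a)). -/
/-! With `u = M - x`, the hypothesis says `u' ≥ 2 / u`, i.e. `(u²)' ≥ 4`. Hence `u² - 4t` is
nondecreasing, so `(M - x t)² ≥ (M - x a)² + 4(t - a)`, and taking square roots (`M - x t > 0`)
gives the bound. -/

lemma monotoneOn_sq_sub_mul_of_le_deriv_sq {D : Set ℝ} (hD : Convex ℝ D) {u u' : ℝ → ℝ} (c : ℝ)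
    (hu : ∀ t ∈ D, HasDerivWithinAt u (u' t) D t) (hc : ∀ t ∈ D, c ≤ 2 * u t * u' t) :
    MonotoneOn (fun t => u t ^ 2 - c * t) D := by
  refine monotoneOn_of_hasDerivWithinAt_nonneg hD (f' := fun t => 2 * u t * u' t - c)
    (fun t ht => ((hu t ht).continuousWithinAt.pow 2).sub (continuousWithinAt_id.const_mul c))
    (fun t ht => ?_) (fun t ht => sub_nonneg.2 (hc t (interior_subset ht)))
  have hsq := ((hu t (interior_subset ht)).mono interior_subset).fun_pow 2
  refine (hsq.fun_sub ((hasDerivWithinAt_id t _).const_mul c)).congr_deriv ?_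
  norm_num

lemma four_le_two_mul_mul_of_le_two_div {y d : ℝ} (hy : y < 0) (hd : d ≤ 2 / y) :
    4 ≤ 2 * y * d := by
  have := (le_div_iff_of_neg hy).1 hd
  linarith

theorem stmt_5_general (a b M : ℝ) (x x' : ℝ → ℝ)
    (hlt : ∀ t ∈ Set.Icc a b, x t < M)
    (hderiv : ∀ t ∈ Set.Icc a b, HasDerivWithinAt x (x' t) (Set.Icc a b) t)
    (hbound : ∀ t ∈ Set.Icc a b, x' t ≤ 2 / (x t - M)) :
    ∀ t ∈ Set.Icc a b, x t ≤ M - Real.sqrt ((M - x a) ^ 2 + 4 * (t - a)) := by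
  intro t ht
  have hmono : MonotoneOn (fun s => (M - x s) ^ 2 - 4 * s) (Set.Icc a b) :=
    monotoneOn_sq_sub_mul_of_le_deriv_sq (convex_Icc a b) 4
      (fun s hs => (hderiv s hs).const_sub M) fun s hs => by
        have := four_le_two_mul_mul_of_le_two_div (sub_neg.2 (hlt s hs)) (hbound s hs)
        linarith
  have hgrowth : (M - x a) ^ 2 - 4 * a ≤ (M - x t) ^ 2 - 4 * t :=
    hmono ⟨le_rfl, ht.1.trans ht.2⟩ ht ht.1
  have hsqrt : Real.sqrt ((M - x a) ^ 2 + 4 * (t - a)) ≤ M - x t :=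
    (Real.sqrt_le_left (sub_pos.2 (hlt t ht)).le).2 (by linarith)
  linarith

/-- ODE comparison: a differentiable function `x` on `[a,b]` staying
below `M` and satisfying `x'(t) ≤ 2/(x(t) − M)` is dominated by the exact solution
`t ↦ M − √((M − x a)² + 4(t − a))`. -/
theorem stmt_5 (a b M : ℝ) (hab : a < b) (x x' : ℝ → ℝ)
    (hlt : ∀ t ∈ Set.Icc a b, x t < M)
    (hderiv : ∀ t ∈ Set.Icc a b, HasDerivWithinAt x (x' t) (Set.Icc a b) t)
    (hbound : ∀ t ∈ Set.Icc a b, x' t ≤ 2 / (x t - M)) :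
    ∀ t ∈ Set.Icc a b, x t ≤ M - Real.sqrt ((M - x a) ^ 2 + 4 * (t - a)) :=
  stmt_5_general a b M x x' hlt hderiv hbound
end

section
/- Let 0 ≤ s < 1, let U : [s,1] → ℝ be continuous, and set M := max_{s ≤ t ≤ 1} U(t). Suppose 4(1 − s) + U(s)² − 2·U(s)·M > 0. Let x : [s,1] → ℝ be differentiable with x(t) < U(t) for all t ∈ [s,1) and x'(t) = 2/(x(t) − U(t)) for all t ∈ [s,1). Then x(1) ≤ M − √((M − x(s))² + 4(1 − s)) < M − √((M − U(s))² + 4(1 − s)) < 0. -/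
/-- Core estimate of the welding criterion: a forward Loewner solution
staying strictly below the driving function `U` on `[s,1)` ends up a definite distance
below `0`, quantified in terms of `s`, `U s` and `M = max_{[s,1]} U` only. -/
theorem stmt_6 (s : ℝ) (hs : s ∈ Set.Ico (0 : ℝ) 1) (U : ℝ → ℝ)
    (hU : ContinuousOn U (Set.Icc s 1))
    (M : ℝ) (hM : M = sSup (U '' Set.Icc s 1))
    (hineq : 0 < 4 * (1 - s) + (U s) ^ 2 - 2 * U s * M)
    (x : ℝ → ℝ) (hdiff : DifferentiableOn ℝ x (Set.Icc s 1))
    (hlt : ∀ t ∈ Set.Ico s 1, x t < U t)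
    (hderiv : ∀ t ∈ Set.Ico s 1, HasDerivWithinAt x (2 / (x t - U t)) (Set.Icc s 1) t) :
    x 1 ≤ M - Real.sqrt ((M - x s) ^ 2 + 4 * (1 - s)) ∧
    M - Real.sqrt ((M - x s) ^ 2 + 4 * (1 - s))
      < M - Real.sqrt ((M - U s) ^ 2 + 4 * (1 - s)) ∧
    M - Real.sqrt ((M - U s) ^ 2 + 4 * (1 - s)) < 0 := by
  obtain ⟨hs0, hs1⟩ := hs
  have hsle : s ≤ 1 := hs1.le
  have hcompact : IsCompact (U '' Set.Icc s 1) := isCompact_Icc.image_of_continuousOn hU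
  have hbdd : BddAbove (U '' Set.Icc s 1) := hcompact.bddAbove
  have hUleM : ∀ t ∈ Set.Icc s 1, U t ≤ M := by
    intro t ht; rw [hM]; exact le_csSup hbdd ⟨t, ht, rfl⟩
  have hUsM : U s ≤ M := hUleM s ⟨le_rfl, hsle⟩
  have hxs : x s < U s := hlt s ⟨le_rfl, hs1⟩
  have hxc : ContinuousOn x (Set.Icc s 1) := hdiff.continuousOn
  -- x 1 ≤ M by continuity
  have hx1M : x 1 ≤ M := by
    have hc : ContinuousWithinAt x (Set.Ico s 1) 1 :=
      (hxc.continuousWithinAt (Set.right_mem_Icc.mpr hsle)).mono Set.Ico_subset_Icc_self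
    have hclos : (1:ℝ) ∈ closure (Set.Ico s 1) := by
      rw [closure_Ico hs1.ne]; exact Set.right_mem_Icc.mpr hsle
    have hne : (nhdsWithin (1:ℝ) (Set.Ico s 1)).NeBot :=
      mem_closure_iff_nhdsWithin_neBot.mp hclos
    refine le_of_tendsto hc ?_
    filter_upwards [self_mem_nhdsWithin] with t ht
    exact (hlt t ht).le.trans (hUleM t ⟨ht.1, ht.2.le⟩)
  -- monotonicity of f
  set f : ℝ → ℝ := fun t => (M - x t) ^ 2 + 4 * (1 - t) with hf
  have hfc : ContinuousOn f (Set.Icc s 1) := by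
    apply ContinuousOn.add
    · exact ((continuousOn_const.sub hxc).pow 2)
    · have : Continuous fun t : ℝ => 4 * (1 - t) := by continuity
      exact this.continuousOn
  have hmono : MonotoneOn f (Set.Icc s 1) := by
    apply monotoneOn_of_deriv_nonneg (convex_Icc s 1) hfc
    · intro t ht
      rw [interior_Icc] at ht
      have hx' : HasDerivAt x (2 / (x t - U t)) t :=
        (hderiv t ⟨ht.1.le, ht.2⟩).hasDerivAt (Icc_mem_nhds ht.1 ht.2)
      exact (((hx'.const_sub M).pow 2).add
        (((hasDerivAt_id t).const_sub 1).const_mul 4)).differentiableAt.differentiableWithinAt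
    · intro t ht
      rw [interior_Icc] at ht
      have htIco : t ∈ Set.Ico s 1 := ⟨ht.1.le, ht.2⟩
      have hx' : HasDerivAt x (2 / (x t - U t)) t :=
        (hderiv t htIco).hasDerivAt (Icc_mem_nhds ht.1 ht.2)
      have hF : HasDerivAt f (2 * (M - x t) ^ 1 * (-(2 / (x t - U t))) + 4 * (-1)) t :=
        ((hx'.const_sub M).pow 2).add (((hasDerivAt_id t).const_sub 1).const_mul 4)
      rw [hF.deriv]
      have hd : 0 < U t - x t := sub_pos.mpr (hlt t htIco)
      have hMx : U t - x t ≤ M - x t := by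
        have := hUleM t ⟨ht.1.le, ht.2.le⟩; linarith
      have h3 : (1:ℝ) ≤ (M - x t) / (U t - x t) := (one_le_div hd).mpr hMx
      have heq : 2 * (M - x t) ^ 1 * (-(2 / (x t - U t))) + 4 * (-1)
          = 4 * ((M - x t) / (U t - x t)) - 4 := by
        rw [show x t - U t = -(U t - x t) by ring, div_neg]
        field_simp
        ring
      rw [heq]; linarith
  have hkey : (M - x s) ^ 2 + 4 * (1 - s) ≤ (M - x 1) ^ 2 := by
    have := hmono (Set.left_mem_Icc.mpr hsle) (Set.right_mem_Icc.mpr hsle) hsle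
    simp only [hf] at this
    nlinarith [this]
  have hApos : 0 ≤ (M - x s) ^ 2 + 4 * (1 - s) := by nlinarith [sq_nonneg (M - x s)]
  constructor
  · have h1 : Real.sqrt ((M - x s) ^ 2 + 4 * (1 - s)) ≤ M - x 1 := by
      rw [show M - x 1 = Real.sqrt ((M - x 1) ^ 2) from (Real.sqrt_sq (by linarith)).symm]
      exact Real.sqrt_le_sqrt hkey
    linarith
  constructor
  · have hlt2 : (M - U s) ^ 2 + 4 * (1 - s) < (M - x s) ^ 2 + 4 * (1 - s) := by
      nlinarith [hxs, hUsM]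
    have := Real.sqrt_lt_sqrt (by nlinarith [sq_nonneg (M - U s)]) hlt2
    linarith
  · have hBpos : 0 < (M - U s) ^ 2 + 4 * (1 - s) := by nlinarith [sq_nonneg (M - U s)]
    rcases le_or_gt 0 M with hM0 | hM0
    · have : M < Real.sqrt ((M - U s) ^ 2 + 4 * (1 - s)) :=
        Real.lt_sqrt_of_sq_lt (by nlinarith)
      linarith
    · have : 0 ≤ Real.sqrt ((M - U s) ^ 2 + 4 * (1 - s)) := Real.sqrt_nonneg _
      linarith
end

section
/- Let T > 0, let U : [0,T] → ℝ be continuous, and let z₀ ∈ ℂ with Im(z₀) > 0. Then there exists a function z : [0,T] → ℂ with z(0) = z₀ such that Im(z(t)) > 0 for all t ∈ [0,T], z is differentiable with z'(t) = −2/(z(t) − U(T−t)) for all t ∈ [0,T], and the function t ↦ Im(z(t)) is strictly increasing on [0,T]. -/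
/-!
The Loewner field `w ↦ -2 / (w - U(T-t))` has imaginary part `2 Im w / |w - U(T-t)|² > 0` on the
upper half-plane, so along a solution `Im z` increases and stays `≥ Im z₀`. Clamping the imaginary
part of the argument from below at `Im z₀` makes the field bounded and globally Lipschitz, so
Picard–Lindelöf yields a solution on all of `[0,T]`; since its imaginary part increases, this
solution never feels the clamp.
-/

open Set
open scoped NNReal

theorem exists_eq_forall_mem_Icc_hasDerivWithinAt_of_lipschitzWith
    {E : Type*} [NormedAddCommGroup E] [NormedSpace ℝ E] [CompleteSpace E]
    {f : ℝ → E → E} {tmin tmax : ℝ} (t₀ : Icc tmin tmax) (x₀ : E) {L K : ℝ≥0}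
    (hlip : ∀ t ∈ Icc tmin tmax, LipschitzWith K (f t))
    (hcont : ∀ x, ContinuousOn (f · x) (Icc tmin tmax))
    (hbound : ∀ t ∈ Icc tmin tmax, ∀ x, ‖f t x‖ ≤ L) :
    ∃ α : ℝ → E, α t₀ = x₀ ∧
      ∀ t ∈ Icc tmin tmax, HasDerivWithinAt α (f t (α t)) (Icc tmin tmax) t := by
  have hlen : max (tmax - t₀) (t₀ - tmin) ≤ (tmax - tmin).toNNReal := by
    rw [Real.coe_toNNReal _ (by linarith [t₀.2.1, t₀.2.2])]
    exact max_le (by linarith [t₀.2.1]) (by linarith [t₀.2.2])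
  refine IsPicardLindelof.exists_eq_forall_mem_Icc_hasDerivWithinAt₀
    (a := L * (tmax - tmin).toNNReal) (L := L) (K := K)
    { lipschitzOnWith := fun t ht => (hlip t ht).lipschitzOnWith
      continuousOn := fun x _ => hcont x
      norm_le := fun t ht x _ => hbound t ht x
      mul_max_le := ?_ }
  simpa using mul_le_mul_of_nonneg_left hlen L.2

noncomputable def clampIm (ε : ℝ) (w : ℂ) : ℂ := ⟨w.re, max w.im ε⟩

@[simp] lemma clampIm_re (ε : ℝ) (w : ℂ) : (clampIm ε w).re = w.re := rfl

@[simp] lemma clampIm_im (ε : ℝ) (w : ℂ) : (clampIm ε w).im = max w.im ε := rfl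

lemma clampIm_of_le {ε : ℝ} {w : ℂ} (h : ε ≤ w.im) : clampIm ε w = w :=
  Complex.ext rfl (max_eq_left h)

lemma lipschitzWith_clampIm (ε : ℝ) : LipschitzWith 1 (clampIm ε) := by
  refine LipschitzWith.of_dist_le_mul fun w w' => ?_
  rw [NNReal.coe_one, one_mul, Complex.dist_eq_re_im, Complex.dist_eq_re_im, clampIm_re,
    clampIm_re, clampIm_im, clampIm_im]
  have him : (max w.im ε - max w'.im ε) ^ 2 ≤ (w.im - w'.im) ^ 2 :=
    sq_le_sq.mpr (abs_max_sub_max_le_abs w.im w'.im ε)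
  exact Real.sqrt_le_sqrt (by linarith)

lemma norm_div_sub_div_le {𝕜 : Type*} [NormedField 𝕜] {ε : ℝ} (hε : 0 < ε) (c : 𝕜) {a b : 𝕜}
    (ha : ε ≤ ‖a‖) (hb : ε ≤ ‖b‖) : ‖c / a - c / b‖ ≤ ‖c‖ / ε ^ 2 * ‖a - b‖ := by
  have ha0 : a ≠ 0 := norm_pos_iff.mp (hε.trans_le ha)
  have hb0 : b ≠ 0 := norm_pos_iff.mp (hε.trans_le hb)
  have hab : ε ^ 2 ≤ ‖a‖ * ‖b‖ := by rw [sq]; exact mul_le_mul ha hb hε.le (hε.le.trans ha)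
  calc ‖c / a - c / b‖ = ‖c‖ * ‖a - b‖ / (‖a‖ * ‖b‖) := by
        rw [div_sub_div _ _ ha0 hb0, mul_comm a c, ← mul_sub, norm_div, norm_mul, norm_mul,
          norm_sub_rev b a]
    _ ≤ ‖c‖ * ‖a - b‖ / ε ^ 2 := by gcongr
    _ = ‖c‖ / ε ^ 2 * ‖a - b‖ := by ring

lemma le_clampIm_im (ε : ℝ) (w : ℂ) : ε ≤ (clampIm ε w).im := le_max_right _ _

lemma im_le_norm_sub_ofReal (w : ℂ) (x : ℝ) : w.im ≤ ‖w - x‖ := by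
  simpa using Complex.im_le_norm (w - x)

lemma sub_ofReal_ne_zero {w : ℂ} (hw : w.im ≠ 0) (x : ℝ) : w - x ≠ 0 :=
  fun h => hw (by simpa using congrArg Complex.im h)

noncomputable def loewnerField (V : ℝ → ℝ) (t : ℝ) (w : ℂ) : ℂ := -2 / (w - V t)

section LoewnerField

variable (V : ℝ → ℝ) (t : ℝ) {ε : ℝ} {w w' : ℂ}

lemma im_loewnerField : (loewnerField V t w).im = 2 * w.im / Complex.normSq (w - V t) := by
  simp only [loewnerField, Complex.div_im, Complex.sub_im, Complex.ofReal_im, sub_zero]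
  norm_num
  ring

lemma im_loewnerField_pos (hw : 0 < w.im) : 0 < (loewnerField V t w).im := by
  rw [im_loewnerField]
  exact div_pos (by linarith) (Complex.normSq_pos.mpr (sub_ofReal_ne_zero hw.ne' _))

lemma norm_loewnerField_le (hε : 0 < ε) (hw : ε ≤ w.im) : ‖loewnerField V t w‖ ≤ 2 / ε := by
  rw [loewnerField, norm_div, norm_neg, Complex.norm_two]
  exact div_le_div_of_nonneg_left zero_le_two hε (hw.trans (im_le_norm_sub_ofReal w _))

lemma dist_loewnerField_le (hε : 0 < ε) (hw : ε ≤ w.im) (hw' : ε ≤ w'.im) :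
    dist (loewnerField V t w) (loewnerField V t w') ≤ 2 / ε ^ 2 * dist w w' := by
  have h := norm_div_sub_div_le hε (-2 : ℂ) (hw.trans (im_le_norm_sub_ofReal w (V t)))
    (hw'.trans (im_le_norm_sub_ofReal w' (V t)))
  simpa only [loewnerField, dist_eq_norm, norm_neg, Complex.norm_two, sub_sub_sub_cancel_right]
    using h

lemma lipschitzWith_loewnerField_clampIm (hε : 0 < ε) :
    LipschitzWith (2 / ε ^ 2).toNNReal (fun w => loewnerField V t (clampIm ε w)) := by
  refine LipschitzWith.of_dist_le_mul fun w w' => ?_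
  rw [Real.coe_toNNReal _ (by positivity)]
  calc dist (loewnerField V t (clampIm ε w)) (loewnerField V t (clampIm ε w'))
      ≤ 2 / ε ^ 2 * dist (clampIm ε w) (clampIm ε w') :=
        dist_loewnerField_le V t hε (le_clampIm_im ε w) (le_clampIm_im ε w')
    _ ≤ 2 / ε ^ 2 * dist w w' := by
        gcongr
        simpa using (lipschitzWith_clampIm ε).dist_le_mul w w'

variable {V}

lemma continuousOn_loewnerField {s : Set ℝ} (hV : ContinuousOn V s) (hw : w.im ≠ 0) :
    ContinuousOn (loewnerField V · w) s :=
  continuousOn_const.div (continuousOn_const.sub (Complex.continuous_ofReal.comp_continuousOn hV))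
    fun _ _ => sub_ofReal_ne_zero hw _

end LoewnerField

lemma strictMonoOn_im_of_hasDerivWithinAt {z z' : ℝ → ℂ} {a b : ℝ}
    (hz : ∀ t ∈ Icc a b, HasDerivWithinAt z (z' t) (Icc a b) t)
    (hpos : ∀ t ∈ Ioo a b, 0 < (z' t).im) :
    StrictMonoOn (fun t => (z t).im) (Icc a b) := by
  refine strictMonoOn_of_hasDerivWithinAt_pos (convex_Icc a b)
    (Complex.continuous_im.comp_continuousOn fun t ht => (hz t ht).continuousWithinAt)
    (fun t ht => ?_) (by simpa using hpos)
  rw [interior_Icc] at ht ⊢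
  exact (Complex.imCLM.hasFDerivAt.comp_hasDerivWithinAt t
    ((hz t (Ioo_subset_Icc_self ht)).mono Ioo_subset_Icc_self))

/-- For initial values in the upper half-plane, the backward chordal
Loewner equation `ż(t) = −2/(z(t) − U(T−t))` has a solution on all of `[0,T]` which
stays in the upper half-plane and whose imaginary part is strictly increasing. -/
theorem stmt_8 (T : ℝ) (hT : 0 < T) (U : ℝ → ℝ) (hU : ContinuousOn U (Set.Icc 0 T))
    (z₀ : ℂ) (hz₀ : 0 < z₀.im) :
    ∃ z : ℝ → ℂ, z 0 = z₀ ∧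
      (∀ t ∈ Set.Icc (0 : ℝ) T, 0 < (z t).im ∧
        HasDerivWithinAt z (-2 / (z t - (U (T - t) : ℂ))) (Set.Icc 0 T) t) ∧
      StrictMonoOn (fun t => (z t).im) (Set.Icc (0 : ℝ) T) := by
  set V : ℝ → ℝ := fun t => U (T - t)
  have hV : ContinuousOn V (Icc 0 T) := hU.comp (continuousOn_const.sub continuousOn_id)
    fun t ht => ⟨by linarith [ht.2], by linarith [ht.1]⟩
  obtain ⟨z, hz0, hz⟩ := exists_eq_forall_mem_Icc_hasDerivWithinAt_of_lipschitzWith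
    (f := fun t w => loewnerField V t (clampIm z₀.im w)) (L := (2 / z₀.im).toNNReal)
    ⟨0, le_rfl, hT.le⟩ z₀
    (fun t _ => lipschitzWith_loewnerField_clampIm V t hz₀)
    (fun w => continuousOn_loewnerField hV (hz₀.trans_le (le_clampIm_im _ w)).ne')
    (fun t _ w => (norm_loewnerField_le V t hz₀ (le_clampIm_im _ w)).trans (Real.le_coe_toNNReal _))
  have hmono : StrictMonoOn (fun t => (z t).im) (Icc 0 T) :=
    strictMonoOn_im_of_hasDerivWithinAt hz
      fun t _ => im_loewnerField_pos V t (hz₀.trans_le (le_clampIm_im _ _))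
  have him : ∀ t ∈ Icc 0 T, z₀.im ≤ (z t).im := fun t ht =>
    hz0 ▸ hmono.monotoneOn (left_mem_Icc.mpr hT.le) ht ht.1
  refine ⟨z, hz0, fun t ht => ⟨hz₀.trans_le (him t ht), ?_⟩, hmono⟩
  simpa [loewnerField, clampIm_of_le (him t ht)] using hz t ht
end

section
/- Let τ < T be real numbers, let U : [τ,T] → ℝ be continuous, and let x, y : [τ,T] → ℝ be differentiable functions with x(t) ≠ U(t) and y(t) ≠ U(t) for all t ∈ [τ,T], x'(t) = 2/(x(t) − U(t)) and y'(t) = 2/(y(t) − U(t)) for all t ∈ [τ,T]. If x(τ) < y(τ), then x(t) < y(t) for all t ∈ [τ,T]. -/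
/-- Forward solutions of the chordal Loewner equation preserve the
order of their initial values: if `x(τ) < y(τ)` then `x(t) < y(t)` on all of `[τ,T]`. -/
theorem stmt_9 (τ T : ℝ) (hτT : τ < T) (U : ℝ → ℝ) (hU : ContinuousOn U (Set.Icc τ T))
    (x y : ℝ → ℝ)
    (hx : ∀ t ∈ Set.Icc τ T, x t ≠ U t ∧
      HasDerivWithinAt x (2 / (x t - U t)) (Set.Icc τ T) t)
    (hy : ∀ t ∈ Set.Icc τ T, y t ≠ U t ∧
      HasDerivWithinAt y (2 / (y t - U t)) (Set.Icc τ T) t)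
    (hxy : x τ < y τ) :
    ∀ t ∈ Set.Icc τ T, x t < y t := by
  intro t ht
  by_contra hlt
  push_neg at hlt
  set f : ℝ → ℝ := fun s => y s - x s with hfdef
  have hτmem : τ ∈ Set.Icc τ T := ⟨le_rfl, hτT.le⟩
  have hxc : ContinuousOn x (Set.Icc τ T) := fun s hs => ((hx s hs).2).continuousWithinAt
  have hyc : ContinuousOn y (Set.Icc τ T) := fun s hs => ((hy s hs).2).continuousWithinAt
  have hfc : ContinuousOn f (Set.Icc τ T) := hyc.sub hxc
  have hfτ : 0 < f τ := by simpa [hfdef] using hxy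
  -- the set of zeros of `f`
  set S : Set ℝ := Set.Icc τ T ∩ f ⁻¹' {0} with hSdef
  have hSclosed : IsClosed S := hfc.preimage_isClosed_of_isClosed isClosed_Icc isClosed_singleton
  have hSne : S.Nonempty := by
    have hsub : Set.Icc τ t ⊆ Set.Icc τ T := Set.Icc_subset_Icc le_rfl ht.2
    have h0 : (0 : ℝ) ∈ Set.Icc (f t) (f τ) := ⟨by simp [hfdef]; linarith, hfτ.le⟩
    obtain ⟨s0, hs0, hfs0⟩ := intermediate_value_Icc' ht.1 (hfc.mono hsub) h0
    exact ⟨s0, hsub hs0, by simpa using hfs0⟩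
  have hSbdd : BddBelow S := ⟨τ, fun s hs => hs.1.1⟩
  set t0 : ℝ := sInf S with ht0def
  have ht0S : t0 ∈ S := hSclosed.csInf_mem hSne hSbdd
  have ht0τ : τ ≤ t0 := le_csInf hSne fun s hs => hs.1.1
  have ht0T : t0 ≤ T := ht0S.1.2
  have hft0 : f t0 = 0 := ht0S.2
  have ht0τ' : τ < t0 := lt_of_le_of_ne ht0τ (fun h => hfτ.ne' (by rw [h]; exact hft0))
  have hsub0 : Set.Icc τ t0 ⊆ Set.Icc τ T := Set.Icc_subset_Icc le_rfl ht0T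
  -- f is positive before t0
  have hpos : ∀ s ∈ Set.Ico τ t0, 0 < f s := by
    intro s hs
    by_contra hns
    push_neg at hns
    rcases eq_or_lt_of_le hns with heq | hltf
    · exact absurd (csInf_le hSbdd ⟨hsub0 ⟨hs.1, hs.2.le⟩, show f s = 0 from heq⟩) (not_le.mpr hs.2)
    · have hsub' : Set.Icc τ s ⊆ Set.Icc τ T := Set.Icc_subset_Icc le_rfl ((hs.2.le.trans ht0T))
      have h0 : (0 : ℝ) ∈ Set.Icc (f s) (f τ) := ⟨hltf.le, hfτ.le⟩
      obtain ⟨s1, hs1, hfs1⟩ := intermediate_value_Icc' hs.1 (hfc.mono hsub') h0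
      have : t0 ≤ s1 := csInf_le hSbdd ⟨hsub' hs1, show f s1 = 0 from hfs1⟩
      linarith [hs1.2, hs.2]
  have hnonneg : ∀ s ∈ Set.Icc τ t0, 0 ≤ f s := by
    intro s hs
    rcases eq_or_lt_of_le hs.2 with heq | hlt'
    · rw [heq, hft0]
    · exact (hpos s ⟨hs.1, hlt'⟩).le
  -- bound on the coefficient
  set c : ℝ → ℝ := fun s => 2 / ((x s - U s) * (y s - U s)) with hcdef
  have hcc : ContinuousOn c (Set.Icc τ T) := by
    apply continuousOn_const.div (((hxc.sub hU)).mul (hyc.sub hU))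
    intro s hs
    exact mul_ne_zero (sub_ne_zero.mpr (hx s hs).1) (sub_ne_zero.mpr (hy s hs).1)
  obtain ⟨K, hK⟩ := isCompact_Icc.exists_bound_of_continuousOn hcc
  -- the auxiliary function h
  set h : ℝ → ℝ := fun s => f s * Real.exp (K * s) with hhdef
  have hhc : ContinuousOn h (Set.Icc τ t0) :=
    (hfc.mono hsub0).mul ((Real.continuous_exp.comp (continuous_const.mul continuous_id)).continuousOn)
  have hint : interior (Set.Icc τ t0) = Set.Ioo τ t0 := interior_Icc
  have hmono : MonotoneOn h (Set.Icc τ t0) := by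
    apply monotoneOn_of_hasDerivWithinAt_nonneg (convex_Icc τ t0) hhc
      (f' := fun s => (2 / (y s - U s) - 2 / (x s - U s)) * Real.exp (K * s)
        + f s * (Real.exp (K * s) * K))
    · intro s hs
      rw [hint] at hs
      have hsT : s ∈ Set.Icc τ T := hsub0 ⟨hs.1.le, hs.2.le⟩
      have hnhds : Set.Icc τ T ∈ nhds s := Icc_mem_nhds hs.1 (lt_of_lt_of_le hs.2 ht0T)
      have hdx : HasDerivAt x (2 / (x s - U s)) s := ((hx s hsT).2).hasDerivAt hnhds
      have hdy : HasDerivAt y (2 / (y s - U s)) s := ((hy s hsT).2).hasDerivAt hnhds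
      have hdf : HasDerivAt f (2 / (y s - U s) - 2 / (x s - U s)) s := hdy.sub hdx
      have hde : HasDerivAt (fun u => Real.exp (K * u)) (Real.exp (K * s) * K) s := by
        simpa using ((hasDerivAt_id s).const_mul K).exp
      exact (hdf.mul hde).hasDerivWithinAt
    · intro s hs
      rw [hint] at hs
      have hsT : s ∈ Set.Icc τ T := hsub0 ⟨hs.1.le, hs.2.le⟩
      have hxne : x s - U s ≠ 0 := sub_ne_zero.mpr (hx s hsT).1
      have hyne : y s - U s ≠ 0 := sub_ne_zero.mpr (hy s hsT).1
      have hfd : 2 / (y s - U s) - 2 / (x s - U s) = -(c s) * f s := by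
        rw [hcdef, hfdef]
        field_simp
        ring
      have hcs : c s ≤ K := (le_abs_self _).trans (by simpa using hK s hsT)
      have hfs : 0 ≤ f s := hnonneg s ⟨hs.1.le, hs.2.le⟩
      have hE : 0 < Real.exp (K * s) := Real.exp_pos _
      rw [hfd]
      have key : -(c s) * f s * Real.exp (K * s) + f s * (Real.exp (K * s) * K)
          = Real.exp (K * s) * (f s * (K - c s)) := by ring
      rw [key]
      exact mul_nonneg hE.le (mul_nonneg hfs (by linarith))
  have h1 : h τ ≤ h t0 := hmono ⟨le_rfl, ht0τ⟩ ⟨ht0τ, le_rfl⟩ ht0τ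
  have h2 : h t0 = 0 := by simp [hhdef, hft0]
  have h3 : 0 < h τ := mul_pos hfτ (Real.exp_pos _)
  linarith
end

section
/- Let C > 0. Define r_n := 1 − 2^{−n} and w_n := 1 − 3·2^{−(n+2)} for integers n ≥ 0, and define U : [0,1] → ℝ by U(t) := C·√(3·2^{n+2})·(t − r_n) for t ∈ [r_n, w_n], U(t) := C·√(3·2^{n+2})·(r_{n+1} − t) for t ∈ [w_n, r_{n+1}], and U(1) := 0. Then U is well-defined and continuous on [0,1], |U(1) − U(1−h)| ≤ C·√h for all h ∈ (0,1], and limsup_{h → 0⁺} |U(1) − U(1−h)|/√h = C. -/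
/-!
`U` is the sum of the tents over the dyadic intervals `[1 - 2⁻ⁿ, 1 - 2⁻⁽ⁿ⁺¹⁾]`. These intervals
have disjoint interiors, so at every point the series reduces to a single tent. The tent heights
`C √(3 · 2⁻⁽ⁿ⁺²⁾)` are summable, so the series converges uniformly and `U` is continuous.
Write `t = 1 - h` with `h ∈ [2q, 4q]` and `q = 2⁻⁽ⁿ⁺²⁾`. Then the bound `U (1 - h) ≤ C √h` becomes
the scale-invariant inequality `3 · tent(2q, 4q, h)² ≤ q h`. Equality holds at the peak `h = 3q`,
so along `h = 3 · 2⁻⁽ⁿ⁺²⁾ → 0` the quotient equals `C`.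
-/

open Real Filter Set Topology

def tent (a b t : ℝ) : ℝ := max 0 (min (t - a) (b - t))

section tent

variable {a b t : ℝ}

lemma tent_nonneg : 0 ≤ tent a b t := le_max_left _ _

lemma tent_eq_zero_of_le_left (ht : t ≤ a) : tent a b t = 0 :=
  max_eq_left ((min_le_left _ _).trans (by linarith))

lemma tent_eq_zero_of_right_le (ht : b ≤ t) : tent a b t = 0 :=
  max_eq_left ((min_le_right _ _).trans (by linarith))

lemma tent_eq_sub_left (h₁ : a ≤ t) (h₂ : t ≤ (a + b) / 2) : tent a b t = t - a := by
  rw [tent, min_eq_left (by linarith), max_eq_right (by linarith)]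

lemma tent_eq_sub_right (h₁ : (a + b) / 2 ≤ t) (h₂ : t ≤ b) : tent a b t = b - t := by
  rw [tent, min_eq_right (by linarith), max_eq_right (by linarith)]

lemma tent_le_half_sub (hab : a ≤ b) : tent a b t ≤ (b - a) / 2 :=
  max_le (by linarith) (by linarith [min_le_left (t - a) (b - t), min_le_right (t - a) (b - t)])

lemma tent_const_sub (c : ℝ) : tent a b (c - t) = tent (c - b) (c - a) t := by
  simp only [tent]
  rw [min_comm]
  ring_nf

lemma continuous_tent : Continuous (tent a b) := by
  unfold tent
  fun_prop

lemma three_mul_tent_sq_le {q s : ℝ} (hq : 0 ≤ q) (hs : 0 ≤ s) :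
    3 * tent (2 * q) (4 * q) s ^ 2 ≤ q * s := by
  rcases le_total (min (s - 2 * q) (4 * q - s)) 0 with hm | hm
  · rw [tent, max_eq_left hm]
    simpa using mul_nonneg hq hs
  · rw [tent, max_eq_right hm]
    have h₁ := min_le_left (s - 2 * q) (4 * q - s)
    have h₂ := min_le_right (s - 2 * q) (4 * q - s)
    rcases le_total s (3 * q) with hs' | hs'
    · nlinarith [mul_nonneg (sub_nonneg.2 hs') (by linarith : 0 ≤ 3 * s - 4 * q)]
    · nlinarith [mul_nonneg (sub_nonneg.2 hs') (by linarith : 0 ≤ 16 * q - 3 * s)]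

end tent

lemma sqrt_pow_of_nonneg {x : ℝ} (hx : 0 ≤ x) (n : ℕ) : √(x ^ n) = √x ^ n := by
  rw [← sqrt_sq (pow_nonneg (sqrt_nonneg x) n), ← pow_mul, mul_comm, pow_mul, sq_sqrt hx]

lemma sqrt_mul_div_self (a : ℝ) {b : ℝ} (hb : 0 ≤ b) : √(a * b) / b = √(a / b) := by
  rw [sqrt_mul' a hb, sqrt_div' a hb, mul_div_assoc, sqrt_div_self', mul_one_div]

lemma summable_sqrt_three_div_two_pow : Summable fun n : ℕ => √(3 / 2 ^ n) := by
  have hr : √(1 / 2) < 1 := by rw [sqrt_lt' one_pos]; norm_num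
  refine ((summable_geometric_of_lt_one (sqrt_nonneg _) hr).mul_left √3).congr fun n => ?_
  rw [← sqrt_pow_of_nonneg (by norm_num), ← sqrt_mul (by norm_num), div_pow, one_pow, mul_one_div]

lemma monotone_one_sub_one_div_two_pow : Monotone fun n : ℕ => (1 : ℝ) - 1 / 2 ^ n :=
  fun _ _ hmn => sub_le_sub_left (one_div_pow_le_one_div_pow_of_le one_le_two hmn) 1

lemma one_sub_one_div_two_pow_le_succ (n : ℕ) : (1 : ℝ) - 1 / 2 ^ n ≤ 1 - 1 / 2 ^ (n + 1) :=
  monotone_one_sub_one_div_two_pow n.le_succ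

lemma exists_mem_Icc_one_div_two_pow {h : ℝ} (h₀ : 0 < h) (h₁ : h ≤ 1) :
    ∃ n : ℕ, h ∈ Icc (1 / 2 ^ (n + 1)) (1 / 2 ^ n) := by
  obtain ⟨n, hn, hn'⟩ := exists_nat_pow_near (one_le_one_div h₀ h₁) one_lt_two
  refine ⟨n, ?_, ?_⟩
  · rw [one_div_le (by positivity) h₀]; exact hn'.le
  · rwa [le_one_div h₀ (by positivity)]

lemma limsup_eq_of_eventually_le_of_frequently_ge {α β : Type*} [ConditionallyCompleteLinearOrder β]
    {f : α → β} {l : Filter α} {c : β} (hle : ∀ᶠ x in l, f x ≤ c) (hge : ∃ᶠ x in l, c ≤ f x) :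
    limsup f l = c :=
  le_antisymm (limsup_le_of_le (.of_frequently_ge hge) hle)
    (le_limsup_of_frequently_le hge (isBoundedUnder_of_eventually_le hle))

lemma tendsto_three_div_two_pow_nhdsGT :
    Tendsto (fun n : ℕ => (3 : ℝ) / 2 ^ (n + 2)) atTop (𝓝[>] 0) := by
  have hgeom : Tendsto (fun n : ℕ => 3 / 4 * (1 / 2 : ℝ) ^ n) atTop (𝓝 0) := by
    have := (tendsto_pow_atTop_nhds_zero_of_lt_one (by norm_num) (by norm_num : (1 / 2 : ℝ) < 1))
    rw [← mul_zero (3 / 4 : ℝ)]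
    exact this.const_mul _
  refine tendsto_nhdsWithin_of_tendsto_nhds_of_eventually_within _ (hgeom.congr fun n => ?_)
    (.of_forall fun n => mem_Ioi.2 (by positivity))
  rw [div_pow, one_pow]
  ring

noncomputable def dyadicTentSum (C t : ℝ) : ℝ :=
  ∑' n : ℕ, C * √(3 * 2 ^ (n + 2)) * tent (1 - 1 / 2 ^ n) (1 - 1 / 2 ^ (n + 1)) t

section dyadicTentSum

variable {C t : ℝ}

lemma dyadicTentSum_eq_of_mem_Icc {n : ℕ}
    (ht : t ∈ Icc (1 - 1 / 2 ^ n : ℝ) (1 - 1 / 2 ^ (n + 1))) :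
    dyadicTentSum C t = C * √(3 * 2 ^ (n + 2)) * tent (1 - 1 / 2 ^ n) (1 - 1 / 2 ^ (n + 1)) t := by
  refine tsum_eq_single n fun m hm => ?_
  rcases hm.lt_or_gt with hmn | hmn
  · rw [tent_eq_zero_of_right_le ((monotone_one_sub_one_div_two_pow hmn).trans ht.1), mul_zero]
  · rw [tent_eq_zero_of_le_left (ht.2.trans (monotone_one_sub_one_div_two_pow hmn)), mul_zero]

lemma dyadicTentSum_one : dyadicTentSum C 1 = 0 := by
  have h (n : ℕ) : tent (1 - 1 / 2 ^ n) (1 - 1 / 2 ^ (n + 1)) (1 : ℝ) = 0 :=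
    tent_eq_zero_of_right_le (sub_le_self 1 (by positivity))
  simp only [dyadicTentSum, h, mul_zero, tsum_zero]

lemma continuous_dyadicTentSum : Continuous (dyadicTentSum C) := by
  refine continuous_tsum (fun n => continuous_const.mul continuous_tent)
    ((summable_nat_add_iff 2).2 summable_sqrt_three_div_two_pow |>.mul_left |C|) fun n t => ?_
  have hwidth : ((1 - 1 / 2 ^ (n + 1)) - (1 - 1 / 2 ^ n)) / 2 = (1 : ℝ) / 2 ^ (n + 2) := by ring
  calc ‖C * √(3 * 2 ^ (n + 2)) * tent (1 - 1 / 2 ^ n) (1 - 1 / 2 ^ (n + 1)) t‖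
      = |C| * (√(3 * 2 ^ (n + 2)) * tent (1 - 1 / 2 ^ n) (1 - 1 / 2 ^ (n + 1)) t) := by
        rw [norm_mul, norm_mul, Real.norm_eq_abs, Real.norm_eq_abs, Real.norm_eq_abs,
          abs_of_nonneg (sqrt_nonneg _), abs_of_nonneg tent_nonneg, mul_assoc]
    _ ≤ |C| * (√(3 * 2 ^ (n + 2)) * (1 / 2 ^ (n + 2))) := by
        gcongr
        exact hwidth ▸ tent_le_half_sub (one_sub_one_div_two_pow_le_succ n)
    _ = |C| * √(3 / 2 ^ (n + 2)) := by
        rw [mul_one_div, sqrt_mul_div_self 3 (by positivity)]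

lemma one_sub_three_div_two_pow_eq (n : ℕ) :
    (1 : ℝ) - 3 / 2 ^ (n + 2) = ((1 - 1 / 2 ^ n) + (1 - 1 / 2 ^ (n + 1))) / 2 := by
  ring

lemma dyadicTentSum_eq_of_mem_Icc_left {n : ℕ}
    (ht : t ∈ Icc (1 - 1 / 2 ^ n : ℝ) (1 - 3 / 2 ^ (n + 2))) :
    dyadicTentSum C t = C * √(3 * 2 ^ (n + 2)) * (t - (1 - 1 / 2 ^ n)) := by
  have hmid := one_sub_three_div_two_pow_eq n
  rw [dyadicTentSum_eq_of_mem_Icc ⟨ht.1, by linarith [ht.2, one_sub_one_div_two_pow_le_succ n]⟩,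
    tent_eq_sub_left ht.1 (hmid ▸ ht.2)]

lemma dyadicTentSum_eq_of_mem_Icc_right {n : ℕ}
    (ht : t ∈ Icc (1 - 3 / 2 ^ (n + 2) : ℝ) (1 - 1 / 2 ^ (n + 1))) :
    dyadicTentSum C t = C * √(3 * 2 ^ (n + 2)) * ((1 - 1 / 2 ^ (n + 1)) - t) := by
  have hmid := one_sub_three_div_two_pow_eq n
  rw [dyadicTentSum_eq_of_mem_Icc ⟨by linarith [ht.1, one_sub_one_div_two_pow_le_succ n], ht.2⟩,
    tent_eq_sub_right (hmid ▸ ht.1) ht.2]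

lemma dyadicTentSum_one_sub_three_div_two_pow (n : ℕ) :
    dyadicTentSum C (1 - 3 / 2 ^ (n + 2)) = C * √(3 / 2 ^ (n + 2)) := by
  have hle : (1 : ℝ) - 1 / 2 ^ n ≤ 1 - 3 / 2 ^ (n + 2) := by
    rw [one_sub_three_div_two_pow_eq]
    linarith [one_sub_one_div_two_pow_le_succ n]
  rw [dyadicTentSum_eq_of_mem_Icc_left ⟨hle, le_rfl⟩, mul_assoc,
    ← sqrt_mul_div_self 3 (by positivity)]
  congr 1
  field_simp
  ring

lemma abs_dyadicTentSum_one_sub_le {h : ℝ} (h₀ : 0 < h) (h₁ : h ≤ 1) :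
    |dyadicTentSum C (1 - h)| ≤ |C| * √h := by
  obtain ⟨n, hn⟩ := exists_mem_Icc_one_div_two_pow h₀ h₁
  set q : ℝ := 1 / 2 ^ (n + 2) with hq
  have hmem : 1 - h ∈ Icc (1 - 1 / 2 ^ n : ℝ) (1 - 1 / 2 ^ (n + 1)) :=
    ⟨by linarith [hn.2], by linarith [hn.1]⟩
  rw [dyadicTentSum_eq_of_mem_Icc hmem, tent_const_sub, sub_sub_cancel, sub_sub_cancel,
    show (1 : ℝ) / 2 ^ (n + 1) = 2 * q by ring, show (1 : ℝ) / 2 ^ n = 4 * q by ring, mul_assoc,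
    abs_mul, abs_of_nonneg (mul_nonneg (sqrt_nonneg _) tent_nonneg)]
  gcongr
  have key : 3 * 2 ^ (n + 2) * tent (2 * q) (4 * q) h ^ 2 ≤ h := by
    calc 3 * 2 ^ (n + 2) * tent (2 * q) (4 * q) h ^ 2
        = 2 ^ (n + 2) * (3 * tent (2 * q) (4 * q) h ^ 2) := by ring
      _ ≤ 2 ^ (n + 2) * (q * h) :=
        mul_le_mul_of_nonneg_left (three_mul_tent_sq_le (by positivity) h₀.le) (by positivity)
      _ = h := by rw [hq]; field_simp
  calc √(3 * 2 ^ (n + 2)) * tent (2 * q) (4 * q) h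
      = √(3 * 2 ^ (n + 2) * tent (2 * q) (4 * q) h ^ 2) := by
        rw [sqrt_mul' _ (sq_nonneg _), sqrt_sq tent_nonneg]
    _ ≤ √h := sqrt_le_sqrt key

end dyadicTentSum

/-- There is a well-defined continuous function `U : [0,1] → ℝ`,
piecewise linear with `U(rₙ) = 0` at `rₙ = 1 − 2⁻ⁿ`, peaks at `wₙ = 1 − 3·2⁻⁽ⁿ⁺²⁾`,
slope `±C √(3·2ⁿ⁺²)` on the pieces and `U 1 = 0`, which satisfies
`|U 1 − U (1−h)| ≤ C √h` for all `h ∈ (0,1]` and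
`limsup_{h→0⁺} |U 1 − U (1−h)|/√h = C`. -/
theorem stmt_10 (C : ℝ) (hC : 0 < C) :
    ∃ U : ℝ → ℝ,
      (∀ n : ℕ, ∀ t ∈ Set.Icc (1 - 1 / 2 ^ n : ℝ) (1 - 3 / 2 ^ (n + 2)),
        U t = C * Real.sqrt (3 * 2 ^ (n + 2)) * (t - (1 - 1 / 2 ^ n))) ∧
      (∀ n : ℕ, ∀ t ∈ Set.Icc (1 - 3 / 2 ^ (n + 2) : ℝ) (1 - 1 / 2 ^ (n + 1)),
        U t = C * Real.sqrt (3 * 2 ^ (n + 2)) * ((1 - 1 / 2 ^ (n + 1)) - t)) ∧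
      U 1 = 0 ∧
      ContinuousOn U (Set.Icc 0 1) ∧
      (∀ h ∈ Set.Ioc (0 : ℝ) 1, |U 1 - U (1 - h)| ≤ C * Real.sqrt h) ∧
      Filter.limsup (fun h => |U 1 - U (1 - h)| / Real.sqrt h)
        (nhdsWithin 0 (Set.Ioi 0)) = C := by
  have habs (h : ℝ) : |dyadicTentSum C 1 - dyadicTentSum C (1 - h)| = |dyadicTentSum C (1 - h)| := by
    rw [dyadicTentSum_one, zero_sub, abs_neg]
  have hbound (h : ℝ) (hh : h ∈ Ioc (0 : ℝ) 1) :
      |dyadicTentSum C 1 - dyadicTentSum C (1 - h)| ≤ C * √h := by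
    simpa only [habs, abs_of_pos hC] using abs_dyadicTentSum_one_sub_le (C := C) hh.1 hh.2
  refine ⟨dyadicTentSum C, fun n t => dyadicTentSum_eq_of_mem_Icc_left,
    fun n t => dyadicTentSum_eq_of_mem_Icc_right, dyadicTentSum_one,
    continuous_dyadicTentSum.continuousOn, hbound, ?_⟩
  refine limsup_eq_of_eventually_le_of_frequently_ge ?_ ?_
  · filter_upwards [Ioc_mem_nhdsGT one_pos] with h hh
    rw [div_le_iff₀ (sqrt_pos.2 hh.1)]
    exact hbound h hh
  · refine tendsto_three_div_two_pow_nhdsGT.frequently (.of_forall fun n => ?_)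
    rw [habs, dyadicTentSum_one_sub_three_div_two_pow, abs_mul, abs_of_pos hC,
      abs_of_nonneg (sqrt_nonneg _), mul_div_assoc, div_self (sqrt_pos.2 (by positivity)).ne',
      mul_one]
end

section
/- Let C > 0 and let U : [0,1] → ℝ be the function defined by U(t) := C·√(3·2^{n+2})·(t − r_n) for t ∈ [r_n, w_n], U(t) := C·√(3·2^{n+2})·(r_{n+1} − t) for t ∈ [w_n, r_{n+1}] (where r_n := 1 − 2^{−n}, w_n := 1 − 3·2^{−(n+2)}, n ≥ 0), and U(1) := 0. Then U ∈ Lip(1/2), i.e. there exists a constant c > 0 such that |U(t) − U(s)| ≤ c·√(|t − s|) for all s, t ∈ [0,1]. -/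
private lemma key_lin (n : ℕ) {d : ℝ} (hd0 : 0 ≤ d) (hd : d ≤ 1 / 2 ^ (n + 2)) :
    Real.sqrt (3 * 2 ^ (n + 2)) * d ≤ Real.sqrt 3 * Real.sqrt d := by
  have h1 : Real.sqrt (3 * 2 ^ (n + 2)) * Real.sqrt (1 / 2 ^ (n + 2)) = Real.sqrt 3 := by
    rw [← Real.sqrt_mul (by positivity)]
    congr 1
    field_simp
  have h2 : Real.sqrt d ≤ Real.sqrt (1 / 2 ^ (n + 2)) := Real.sqrt_le_sqrt hd
  calc Real.sqrt (3 * 2 ^ (n + 2)) * d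
      = Real.sqrt (3 * 2 ^ (n + 2)) * Real.sqrt d * Real.sqrt d := by
        rw [mul_assoc, Real.mul_self_sqrt hd0]
    _ ≤ Real.sqrt (3 * 2 ^ (n + 2)) * Real.sqrt (1 / 2 ^ (n + 2)) * Real.sqrt d := by
        gcongr
    _ = Real.sqrt 3 * Real.sqrt d := by rw [h1]

private lemma r_mono {a b : ℕ} (h : a ≤ b) : (1 - 1 / 2 ^ a : ℝ) ≤ 1 - 1 / 2 ^ b := by
  have h1 : (2:ℝ) ^ a ≤ 2 ^ b := pow_le_pow_right₀ one_le_two h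
  have h2 : (1:ℝ) / 2 ^ b ≤ 1 / 2 ^ a := one_div_le_one_div_of_le (by positivity) h1
  linarith

private lemma find_tooth (x : ℝ) (hx0 : 0 ≤ x) (hx1 : x < 1) :
    ∃ n : ℕ, 1 - 1 / 2 ^ n ≤ x ∧ x < 1 - 1 / 2 ^ (n + 1) := by
  have h : ∃ k : ℕ, x < 1 - 1 / 2 ^ (k + 1) := by
    obtain ⟨k, hk⟩ := exists_pow_lt_of_lt_one (by linarith : (0:ℝ) < 1 - x)
      (by norm_num : (1:ℝ)/2 < 1)
    have h3 : (1:ℝ) / 2 ^ (k + 1) ≤ (1/2 : ℝ) ^ k := by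
      rw [div_pow, one_pow]
      exact one_div_le_one_div_of_le (by positivity) (pow_le_pow_right₀ one_le_two k.le_succ)
    exact ⟨k, by linarith⟩
  classical
  refine ⟨Nat.find h, ?_, Nat.find_spec h⟩
  rcases Nat.eq_zero_or_pos (Nat.find h) with h0 | h0
  · rw [h0]; simpa using hx0
  · have hm := Nat.find_min h (Nat.sub_lt h0 one_pos)
    push_neg at hm
    have heq : Nat.find h - 1 + 1 = Nat.find h := Nat.succ_pred_eq_of_pos h0
    rw [← heq]
    exact hm

private lemma ptb (C : ℝ) (hC : 0 ≤ C) (U : ℝ → ℝ) (n : ℕ)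
    (hU1 : ∀ t ∈ Set.Icc (1 - 1 / 2 ^ n : ℝ) (1 - 3 / 2 ^ (n + 2)),
      U t = C * Real.sqrt (3 * 2 ^ (n + 2)) * (t - (1 - 1 / 2 ^ n)))
    (hU2 : ∀ t ∈ Set.Icc (1 - 3 / 2 ^ (n + 2) : ℝ) (1 - 1 / 2 ^ (n + 1)),
      U t = C * Real.sqrt (3 * 2 ^ (n + 2)) * ((1 - 1 / 2 ^ (n + 1)) - t))
    (t : ℝ) (h1 : 1 - 1 / 2 ^ n ≤ t) (h2 : t ≤ 1 - 1 / 2 ^ (n + 1)) :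
    |U t| ≤ C * Real.sqrt 3 * Real.sqrt (t - (1 - 1 / 2 ^ n)) ∧
    |U t| ≤ C * Real.sqrt 3 * Real.sqrt ((1 - 1 / 2 ^ (n + 1)) - t) := by
  have e1 : (1:ℝ) / 2 ^ (n + 1) = (1 / 2 ^ n) / 2 := by ring
  have e2 : (1:ℝ) / 2 ^ (n + 2) = (1 / 2 ^ n) / 4 := by ring
  have e3 : (3:ℝ) / 2 ^ (n + 2) = 3 * (1 / 2 ^ n) / 4 := by ring
  have hq : (0:ℝ) < 1 / 2 ^ n := by positivity
  have hK : (0:ℝ) ≤ C * Real.sqrt 3 := mul_nonneg hC (Real.sqrt_nonneg _)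
  rcases le_total t (1 - 3 / 2 ^ (n + 2)) with hc | hc
  · have hUt := hU1 t ⟨h1, hc⟩
    have hd0 : (0:ℝ) ≤ t - (1 - 1 / 2 ^ n) := by linarith
    have hd : t - (1 - 1 / 2 ^ n) ≤ 1 / 2 ^ (n + 2) := by linarith [e2, e3]
    have key := key_lin n hd0 hd
    have habs : |U t| = C * Real.sqrt (3 * 2 ^ (n + 2)) * (t - (1 - 1 / 2 ^ n)) := by
      rw [hUt, abs_of_nonneg (mul_nonneg (mul_nonneg hC (Real.sqrt_nonneg _)) hd0)]
    have hfirst : |U t| ≤ C * Real.sqrt 3 * Real.sqrt (t - (1 - 1 / 2 ^ n)) := by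
      rw [habs, mul_assoc, mul_assoc]
      exact mul_le_mul_of_nonneg_left key hC
    refine ⟨hfirst, hfirst.trans ?_⟩
    exact mul_le_mul_of_nonneg_left (Real.sqrt_le_sqrt (by linarith [e1, e2, e3])) hK
  · have hUt := hU2 t ⟨hc, h2⟩
    have hd0 : (0:ℝ) ≤ (1 - 1 / 2 ^ (n + 1)) - t := by linarith
    have hd : (1 - 1 / 2 ^ (n + 1)) - t ≤ 1 / 2 ^ (n + 2) := by linarith [e1, e2, e3]
    have key := key_lin n hd0 hd
    have habs : |U t| = C * Real.sqrt (3 * 2 ^ (n + 2)) * ((1 - 1 / 2 ^ (n + 1)) - t) := by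
      rw [hUt, abs_of_nonneg (mul_nonneg (mul_nonneg hC (Real.sqrt_nonneg _)) hd0)]
    have hsecond : |U t| ≤ C * Real.sqrt 3 * Real.sqrt ((1 - 1 / 2 ^ (n + 1)) - t) := by
      rw [habs, mul_assoc, mul_assoc]
      exact mul_le_mul_of_nonneg_left key hC
    refine ⟨hsecond.trans ?_, hsecond⟩
    exact mul_le_mul_of_nonneg_left (Real.sqrt_le_sqrt (by linarith [e1, e2, e3])) hK

private lemma tooth (C : ℝ) (hC : 0 ≤ C) (U : ℝ → ℝ) (n : ℕ)
    (hU1 : ∀ t ∈ Set.Icc (1 - 1 / 2 ^ n : ℝ) (1 - 3 / 2 ^ (n + 2)),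
      U t = C * Real.sqrt (3 * 2 ^ (n + 2)) * (t - (1 - 1 / 2 ^ n)))
    (hU2 : ∀ t ∈ Set.Icc (1 - 3 / 2 ^ (n + 2) : ℝ) (1 - 1 / 2 ^ (n + 1)),
      U t = C * Real.sqrt (3 * 2 ^ (n + 2)) * ((1 - 1 / 2 ^ (n + 1)) - t))
    (s t : ℝ) (hs : 1 - 1 / 2 ^ n ≤ s) (hst : s ≤ t) (ht : t ≤ 1 - 1 / 2 ^ (n + 1)) :
    |U t - U s| ≤ C * Real.sqrt 3 * Real.sqrt (t - s) := by
  have e1 : (1:ℝ) / 2 ^ (n + 1) = (1 / 2 ^ n) / 2 := by ring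
  have e2 : (1:ℝ) / 2 ^ (n + 2) = (1 / 2 ^ n) / 4 := by ring
  have e3 : (3:ℝ) / 2 ^ (n + 2) = 3 * (1 / 2 ^ n) / 4 := by ring
  have hq : (0:ℝ) < 1 / 2 ^ n := by positivity
  have hst0 : (0:ℝ) ≤ t - s := by linarith
  rcases le_total t (1 - 3 / 2 ^ (n + 2)) with hc1 | hc1
  · -- both on the increasing piece
    have hUs := hU1 s ⟨hs, le_trans hst hc1⟩
    have hUt := hU1 t ⟨le_trans hs hst, hc1⟩
    have hd : t - s ≤ 1 / 2 ^ (n + 2) := by linarith [e2, e3]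
    have key := key_lin n hst0 hd
    have : U t - U s = C * Real.sqrt (3 * 2 ^ (n + 2)) * (t - s) := by
      rw [hUt, hUs]; ring
    rw [this, abs_of_nonneg (mul_nonneg (mul_nonneg hC (Real.sqrt_nonneg _)) hst0),
      mul_assoc, mul_assoc]
    exact mul_le_mul_of_nonneg_left key hC
  · rcases le_total (1 - 3 / 2 ^ (n + 2)) s with hc2 | hc2
    · -- both on the decreasing piece
      have hUs := hU2 s ⟨hc2, le_trans hst ht⟩
      have hUt := hU2 t ⟨le_trans hc2 hst, ht⟩
      have hd : t - s ≤ 1 / 2 ^ (n + 2) := by linarith [e1, e2, e3]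
      have key := key_lin n hst0 hd
      have : U t - U s = C * Real.sqrt (3 * 2 ^ (n + 2)) * (s - t) := by
        rw [hUt, hUs]; ring
      rw [this, abs_mul, abs_of_nonneg (mul_nonneg hC (Real.sqrt_nonneg _)),
        abs_of_nonpos (by linarith : s - t ≤ 0), neg_sub, mul_assoc, mul_assoc]
      exact mul_le_mul_of_nonneg_left key hC
    · -- straddling the peak
      have hUs := hU1 s ⟨hs, hc2⟩
      have hUt := hU2 t ⟨hc1, ht⟩
      set d : ℝ := |((1 - 1 / 2 ^ (n + 1)) - t) - (s - (1 - 1 / 2 ^ n))| with hddef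
      have hd0 : 0 ≤ d := abs_nonneg _
      have hd : d ≤ 1 / 2 ^ (n + 2) := by
        rw [hddef, abs_le]
        constructor <;> linarith [e1, e2, e3]
      have hdts : d ≤ t - s := by
        rw [hddef, abs_le]
        constructor <;> linarith [e1, e2, e3]
      have key := key_lin n hd0 hd
      have heq : |U t - U s| = C * Real.sqrt (3 * 2 ^ (n + 2)) * d := by
        have : U t - U s = C * Real.sqrt (3 * 2 ^ (n + 2)) *
            (((1 - 1 / 2 ^ (n + 1)) - t) - (s - (1 - 1 / 2 ^ n))) := by
          rw [hUt, hUs]; ring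
        rw [this, abs_mul, abs_of_nonneg (mul_nonneg hC (Real.sqrt_nonneg _))]
      rw [heq, mul_assoc, mul_assoc]
      refine mul_le_mul_of_nonneg_left (key.trans ?_) hC
      gcongr

/-- The driving function of the main theorem (piecewise linear with
zeros at `rₙ = 1 − 2⁻ⁿ`, peaks at `wₙ = 1 − 3·2⁻⁽ⁿ⁺²⁾` and `U 1 = 0`) belongs to
`Lip(1/2)`: there is `c > 0` with `|U t − U s| ≤ c √|t − s|` for all `s, t ∈ [0,1]`. -/
theorem stmt_11 (C : ℝ) (hC : 0 < C) (U : ℝ → ℝ)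
    (hU1 : ∀ n : ℕ, ∀ t ∈ Set.Icc (1 - 1 / 2 ^ n : ℝ) (1 - 3 / 2 ^ (n + 2)),
      U t = C * Real.sqrt (3 * 2 ^ (n + 2)) * (t - (1 - 1 / 2 ^ n)))
    (hU2 : ∀ n : ℕ, ∀ t ∈ Set.Icc (1 - 3 / 2 ^ (n + 2) : ℝ) (1 - 1 / 2 ^ (n + 1)),
      U t = C * Real.sqrt (3 * 2 ^ (n + 2)) * ((1 - 1 / 2 ^ (n + 1)) - t))
    (hU3 : U 1 = 0) :
    ∃ c > 0, ∀ s ∈ Set.Icc (0 : ℝ) 1, ∀ t ∈ Set.Icc (0 : ℝ) 1,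
      |U t - U s| ≤ c * Real.sqrt |t - s| := by
  have hC' : 0 ≤ C := hC.le
  have hK : (0:ℝ) ≤ C * Real.sqrt 3 := mul_nonneg hC' (Real.sqrt_nonneg _)
  refine ⟨2 * C * Real.sqrt 3, by positivity, ?_⟩
  have main : ∀ s ∈ Set.Icc (0:ℝ) 1, ∀ t ∈ Set.Icc (0:ℝ) 1, s ≤ t →
      |U t - U s| ≤ 2 * C * Real.sqrt 3 * Real.sqrt |t - s| := by
    rintro s ⟨hs0, hs1⟩ t ⟨ht0, ht1⟩ hst
    rw [abs_of_nonneg (by linarith : (0:ℝ) ≤ t - s)]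
    rcases eq_or_lt_of_le hst with rfl | hlt
    · simp only [sub_self, abs_zero]
      positivity
    have hs1' : s < 1 := lt_of_lt_of_le hlt ht1
    obtain ⟨n, hn1, hn2⟩ := find_tooth s hs0 hs1'
    rcases eq_or_lt_of_le ht1 with rfl | ht1'
    · -- t = 1
      rw [hU3, zero_sub, abs_neg]
      have hb := (ptb C hC' U n (hU1 n) (hU2 n) s hn1 hn2.le).2
      have hle : Real.sqrt ((1 - 1 / 2 ^ (n + 1)) - s) ≤ Real.sqrt (1 - s) := by
        gcongr
        have : (0:ℝ) < 1 / 2 ^ (n + 1) := by positivity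
        linarith
      calc |U s| ≤ C * Real.sqrt 3 * Real.sqrt ((1 - 1 / 2 ^ (n + 1)) - s) := hb
        _ ≤ C * Real.sqrt 3 * Real.sqrt (1 - s) := by gcongr
        _ ≤ 2 * C * Real.sqrt 3 * Real.sqrt (1 - s) := by
            nlinarith [Real.sqrt_nonneg (1 - s)]
    · obtain ⟨m, hm1, hm2⟩ := find_tooth t ht0 ht1'
      rcases lt_trichotomy n m with hnm | hnm | hnm
      · -- different teeth
        have hr1 : (1 - 1 / 2 ^ (n + 1) : ℝ) ≤ 1 - 1 / 2 ^ m := r_mono hnm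
        have b2 := (ptb C hC' U n (hU1 n) (hU2 n) s hn1 hn2.le).2
        have b1 := (ptb C hC' U m (hU1 m) (hU2 m) t hm1 hm2.le).1
        have hts1 : t - (1 - 1 / 2 ^ m) ≤ t - s := by linarith
        have hts2 : (1 - 1 / 2 ^ (n + 1)) - s ≤ t - s := by linarith
        calc |U t - U s| ≤ |U t| + |U s| := abs_sub _ _
          _ ≤ C * Real.sqrt 3 * Real.sqrt (t - (1 - 1 / 2 ^ m))
              + C * Real.sqrt 3 * Real.sqrt ((1 - 1 / 2 ^ (n + 1)) - s) := add_le_add b1 b2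
          _ ≤ C * Real.sqrt 3 * Real.sqrt (t - s) + C * Real.sqrt 3 * Real.sqrt (t - s) := by
              gcongr
          _ = 2 * C * Real.sqrt 3 * Real.sqrt (t - s) := by ring
      · subst hnm
        have := tooth C hC' U n (hU1 n) (hU2 n) s t hn1 hst hm2.le
        calc |U t - U s| ≤ C * Real.sqrt 3 * Real.sqrt (t - s) := this
          _ ≤ 2 * C * Real.sqrt 3 * Real.sqrt (t - s) := by
              nlinarith [Real.sqrt_nonneg (t - s)]
      · exfalso
        have : (1 - 1 / 2 ^ (m + 1) : ℝ) ≤ 1 - 1 / 2 ^ n := r_mono hnm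
        linarith
  intro s hs t ht
  rcases le_total s t with h | h
  · exact main s hs t ht h
  · rw [abs_sub_comm (U t), abs_sub_comm t s]
    exact main t ht s hs h
end

section
/- Let C > 0 and let U : [0,1] → ℝ be the function defined by U(t) := C·√(3·2^{n+2})·(t − r_n) for t ∈ [r_n, w_n], U(t) := C·√(3·2^{n+2})·(r_{n+1} − t) for t ∈ [w_n, r_{n+1}] (where r_n := 1 − 2^{−n}, w_n := 1 − 3·2^{−(n+2)}, n ≥ 0), and U(1) := 0. Then U satisfies the self-similarity relation (1/√2)·U(2t) = U(t + 1/2) for all t ∈ [0, 1/2]. -/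
/-- The driving function of the main theorem (piecewise linear with
zeros at `rₙ = 1 − 2⁻ⁿ`, peaks at `wₙ = 1 − 3·2⁻⁽ⁿ⁺²⁾` and `U 1 = 0`) satisfies the
self-similarity relation `(1/√2)·U(2t) = U(t + 1/2)` for all `t ∈ [0, 1/2]`. -/
theorem stmt_12 (C : ℝ) (hC : 0 < C) (U : ℝ → ℝ)
    (hU1 : ∀ n : ℕ, ∀ t ∈ Set.Icc (1 - 1 / 2 ^ n : ℝ) (1 - 3 / 2 ^ (n + 2)),
      U t = C * Real.sqrt (3 * 2 ^ (n + 2)) * (t - (1 - 1 / 2 ^ n)))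
    (hU2 : ∀ n : ℕ, ∀ t ∈ Set.Icc (1 - 3 / 2 ^ (n + 2) : ℝ) (1 - 1 / 2 ^ (n + 1)),
      U t = C * Real.sqrt (3 * 2 ^ (n + 2)) * ((1 - 1 / 2 ^ (n + 1)) - t))
    (hU3 : U 1 = 0) :
    ∀ t ∈ Set.Icc (0 : ℝ) (1 / 2),
      (1 / Real.sqrt 2) * U (2 * t) = U (t + 1 / 2) := by
  intro t ⟨ht0, ht1⟩
  have hs2 : Real.sqrt 2 * Real.sqrt 2 = 2 := Real.mul_self_sqrt (by norm_num)
  have hs2pos : (0:ℝ) < Real.sqrt 2 := Real.sqrt_pos.mpr (by norm_num)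
  rcases eq_or_lt_of_le ht1 with h | h
  · rw [show 2 * t = 1 by rw [h]; norm_num, show t + 1/2 = 1 by rw [h]; norm_num, hU3]
    ring
  · -- t < 1/2
    set u : ℝ := 1 - 2 * t with hu_def
    have hu0 : 0 < u := by simp only [hu_def]; linarith
    have hu1 : 1 ≤ 1 / u := by
      rw [le_div_iff₀ hu0]; simp only [hu_def]; linarith
    set n : ℕ := (Int.log 2 (1 / u)).toNat with hn_def
    have hlog0 : 0 ≤ Int.log 2 (1 / u) :=
      (Int.zpow_le_iff_le_log (b := 2) (by norm_num) (by positivity)).mp (by simpa using hu1)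
    have h1 : (2:ℝ) ^ n ≤ 1 / u := by
      have := Int.zpow_log_le_self (b := 2) (R := ℝ) (by norm_num)
        (show (0:ℝ) < 1 / u by positivity)
      rwa [show Int.log 2 (1/u) = (n : ℤ) by rw [hn_def, Int.toNat_of_nonneg hlog0],
        zpow_natCast] at this
    have h2 : 1 / u < (2:ℝ) ^ (n + 1) := by
      have := Int.lt_zpow_succ_log_self (b := 2) (R := ℝ) (by norm_num) (1 / u)
      rwa [show Int.log 2 (1/u) + 1 = ((n + 1 : ℕ) : ℤ) by
        rw [show ((n + 1 : ℕ) : ℤ) = (n : ℤ) + 1 by push_cast; ring,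
          hn_def, Int.toNat_of_nonneg hlog0],
        zpow_natCast] at this
    have hp : (0:ℝ) < 2 ^ n := by positivity
    have e1 : (1:ℝ) / 2 ^ (n + 1) = 1 / 2 ^ n / 2 := by rw [pow_succ]; ring
    have e2 : (3:ℝ) / 2 ^ (n + 2) = 3 * (1 / 2 ^ n) / 4 := by rw [pow_add]; field_simp; ring
    have e3 : (3:ℝ) / 2 ^ (n + 1 + 2) = 3 * (1 / 2 ^ n) / 8 := by rw [pow_add, pow_add]; field_simp; ring
    have e4 : (1:ℝ) / 2 ^ (n + 1 + 1) = 1 / 2 ^ n / 4 := by rw [pow_add, pow_add]; field_simp; ring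
    -- bounds on s = 2t
    have hb1 : 1 - 1 / 2 ^ n ≤ 2 * t := by
      have : u ≤ 1 / 2 ^ n := by
        rw [le_div_iff₀ hp]
        calc u * 2 ^ n ≤ u * (1 / u) := mul_le_mul_of_nonneg_left h1 hu0.le
          _ = 1 := by field_simp
      simp only [hu_def] at this; linarith
    have hb2 : 2 * t ≤ 1 - 1 / 2 ^ (n + 1) := by
      have hp1 : (0:ℝ) < 2 ^ (n + 1) := by positivity
      have : 1 / 2 ^ (n + 1) ≤ u := by
        rw [div_le_iff₀ hp1]
        have := (div_lt_iff₀ hu0).mp h2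
        linarith
      simp only [hu_def] at this; linarith
    have key : Real.sqrt (3 * 2 ^ (n + 1 + 2)) = Real.sqrt 2 * Real.sqrt (3 * 2 ^ (n + 2)) := by
      rw [← Real.sqrt_mul (by norm_num)]
      congr 1
      ring
    by_cases hcase : 2 * t ≤ 1 - 3 / 2 ^ (n + 2)
    · -- first piece
      have hs := hU1 n (2 * t) ⟨hb1, hcase⟩
      rw [e2] at hcase
      have ht' := hU1 (n + 1) (t + 1/2)
        ⟨by rw [e1]; linarith, by rw [e3]; linarith⟩
      rw [hs, ht', key]
      rw [div_mul_eq_mul_div, div_eq_iff (ne_of_gt hs2pos)]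
      linear_combination (- C * Real.sqrt (3 * 2 ^ (n + 2)) *
        (t + 1/2 - (1 - 1/(2:ℝ)^(n+1)))) * hs2
    · push_neg at hcase
      have hs := hU2 n (2 * t) ⟨hcase.le, hb2⟩
      rw [e2] at hcase
      have ht' := hU2 (n + 1) (t + 1/2)
        ⟨by rw [e3]; linarith, by rw [e4, e1] at *; linarith⟩
      rw [hs, ht', key]
      rw [div_mul_eq_mul_div, div_eq_iff (ne_of_gt hs2pos)]
      linear_combination (- C * Real.sqrt (3 * 2 ^ (n + 2)) *
        (1 - 1/(2:ℝ)^(n+1+1) - (t + 1/2))) * hs2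
end
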